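/- arXiv:2303.06432 — 3 statements merged into one kernel-verified Lean document; each statement's English description precedes it below -/
import Mathlib

section
/- Let T be a tree on n vertices with diameter d ≥ 2, and let ε(T) = 1 if T has one weight center and ε(T) = 0 if T has two weight centers. Then rn(T) ≥ (n-1)(d + ε(T)) - 2·L(T) + ε(T), where L(T) = Σ_{u ∈ V(T)} min{d_T(u,x) : x ∈ W(T)}. -/
open Finset

namespace RadioNr

variable {V : Type*}

/-- A radio labeling of `G`: for all distinct vertices,
`d(u,v) + |f u - f v| ≥ diam G + 1`. -/
def IsRadioLabeling [Fintype V] (G : SimpleGraph V) (f : V → ℕ) : Prop :=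
  ∀ u v : V, u ≠ v →
    (G.diam : ℤ) + 1 ≤ (G.dist u v : ℤ) + |(f u : ℤ) - (f v : ℤ)|

/-- The span of a labeling: the maximum label used. -/
def span [Fintype V] (f : V → ℕ) : ℕ := Finset.univ.sup f

/-- The radio number: minimum span over all radio labelings. -/
noncomputable def radioNumber [Fintype V] (G : SimpleGraph V) : ℕ :=
  sInf {k | ∃ f : V → ℕ, IsRadioLabeling G f ∧ span f = k}

/-- The weight of `G` at `v`: sum of distances to all vertices. -/
noncomputable def wt [Fintype V] (G : SimpleGraph V) (v : V) : ℕ := ∑ u : V, G.dist u v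

/-- A weight center minimizes the weight. -/
def IsWeightCenter [Fintype V] (G : SimpleGraph V) (v : V) : Prop :=
  ∀ x : V, wt G v ≤ wt G x

/-- The weight of `G`: the minimum total distance. -/
noncomputable def minWt [Fintype V] (G : SimpleGraph V) : ℕ :=
  sInf (Set.range (wt G))

/-- The level of `u`: distance to the nearest weight center. -/
noncomputable def level [Fintype V] (G : SimpleGraph V) (u : V) : ℕ :=
  sInf {n | ∃ x, IsWeightCenter G x ∧ G.dist u x = n}

/-- The total level of `G`. -/
noncomputable def totalLevel [Fintype V] (G : SimpleGraph V) : ℕ :=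
  ∑ u : V, level G u

end RadioNr

open RadioNr


section Aux
open SimpleGraph

variable {V : Type*}

lemma tree_path_length_eq_dist {T : SimpleGraph V} (hT : T.IsTree) {u v : V}
    (p : T.Walk u v) (hp : p.IsPath) : p.length = T.dist u v := by
  obtain ⟨q, hq, hql⟩ := hT.isConnected.exists_path_of_dist u v
  rw [(hT.existsUnique_path u v).unique hp hq, hql]

lemma tree_getVert_injOn {G : SimpleGraph V} : ∀ {u v : V} (p : G.Walk u v), p.IsPath →
    ∀ i, i ≤ p.length → ∀ j, j ≤ p.length → p.getVert i = p.getVert j → i = j := by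
  intro u v p
  induction p with
  | nil => intro _ i hi j hj _; simp only [SimpleGraph.Walk.length_nil] at hi hj; omega
  | @cons u w v h q ih =>
    intro hp i hi j hj hij
    rw [SimpleGraph.Walk.cons_isPath_iff] at hp
    match i, j with
    | 0, 0 => rfl
    | 0, j+1 =>
      exfalso
      apply hp.2
      rw [SimpleGraph.Walk.getVert_zero, SimpleGraph.Walk.getVert_cons_succ] at hij
      rw [SimpleGraph.Walk.mem_support_iff_exists_getVert]
      exact ⟨j, hij.symm, by simpa using hj⟩
    | i+1, 0 =>
      exfalso
      apply hp.2
      rw [SimpleGraph.Walk.getVert_zero, SimpleGraph.Walk.getVert_cons_succ] at hij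
      rw [SimpleGraph.Walk.mem_support_iff_exists_getVert]
      exact ⟨i, hij, by simpa using hi⟩
    | i+1, j+1 =>
      rw [SimpleGraph.Walk.getVert_cons_succ, SimpleGraph.Walk.getVert_cons_succ] at hij
      have := ih hp.1 i (by simpa using hi) j (by simpa using hj) hij
      omega

lemma tree_dist_ne_of_adj {T : SimpleGraph V} (hT : T.IsTree) {a b : V} (hab : T.Adj a b)
    (u : V) : T.dist u a ≠ T.dist u b := by
  classical
  obtain ⟨q, hq, hql⟩ := hT.isConnected.exists_path_of_dist u b
  by_cases ha : a ∈ q.support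
  · have h1 : (q.takeUntil a ha).length = T.dist u a :=
      tree_path_length_eq_dist hT _ (hq.takeUntil ha)
    have h2 : (q.dropUntil a ha).length = T.dist a b :=
      tree_path_length_eq_dist hT _ (hq.dropUntil ha)
    have h3 : T.dist a b = 1 := SimpleGraph.dist_eq_one_iff_adj.mpr hab
    have h5 : (q.takeUntil a ha).length + (q.dropUntil a ha).length = q.length := by
      rw [← SimpleGraph.Walk.length_append, SimpleGraph.Walk.take_spec q ha]
    omega
  · have hpath : (q.concat hab.symm).IsPath := by
      rw [← SimpleGraph.Walk.isPath_reverse_iff, SimpleGraph.Walk.reverse_concat]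
      refine SimpleGraph.Walk.IsPath.cons (by rwa [SimpleGraph.Walk.isPath_reverse_iff]) ?_
      rw [SimpleGraph.Walk.support_reverse, List.mem_reverse]
      exact ha
    have hlen := tree_path_length_eq_dist hT _ hpath
    rw [SimpleGraph.Walk.length_concat] at hlen
    omega

lemma tree_midpoint {T : SimpleGraph V} (hT : T.IsTree) {a b c : V} (hba : T.Adj b a)
    (hbc : T.Adj b c) (hac : a ≠ c) (u : V) :
    2 * (T.dist u b : ℤ) ≤ (T.dist u a : ℤ) + (T.dist u c : ℤ) := by
  have hconn := hT.isConnected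
  have ta : T.dist u b ≤ T.dist u a + 1 := by
    have h := hconn.dist_triangle (u := u) (v := a) (w := b)
    rwa [SimpleGraph.dist_eq_one_iff_adj.mpr hba.symm] at h
  have tc : T.dist u b ≤ T.dist u c + 1 := by
    have h := hconn.dist_triangle (u := u) (v := c) (w := b)
    rwa [SimpleGraph.dist_eq_one_iff_adj.mpr hbc.symm] at h
  have na := tree_dist_ne_of_adj hT hba.symm u
  have nc := tree_dist_ne_of_adj hT hbc.symm u
  by_cases h1 : T.dist u b ≤ T.dist u a
  · by_cases h2 : T.dist u b ≤ T.dist u c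
    · push_cast; omega
    · push_cast; omega
  · by_cases h2 : T.dist u b ≤ T.dist u c
    · push_cast; omega
    · exfalso
      push_neg at h1 h2
      have ha1 : T.dist u a + 1 = T.dist u b := by omega
      have hc1 : T.dist u c + 1 = T.dist u b := by omega
      obtain ⟨p, hp, hpl⟩ := hconn.exists_path_of_dist u a
      obtain ⟨q, hq, hql⟩ := hconn.exists_path_of_dist u c
      have hppath : (p.concat hba.symm).IsPath := by
        apply SimpleGraph.Walk.isPath_of_length_eq_dist
        rw [SimpleGraph.Walk.length_concat, hpl, ha1]
      have hqpath : (q.concat hbc.symm).IsPath := by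
        apply SimpleGraph.Walk.isPath_of_length_eq_dist
        rw [SimpleGraph.Walk.length_concat, hql, hc1]
      have heq : p.concat hba.symm = q.concat hbc.symm :=
        (hT.existsUnique_path u b).unique hppath hqpath
      have h5 : ((p.concat hba.symm).reverse).support = ((q.concat hbc.symm).reverse).support := by
        rw [heq]
      rw [SimpleGraph.Walk.reverse_concat, SimpleGraph.Walk.reverse_concat,
        SimpleGraph.Walk.support_cons, SimpleGraph.Walk.support_cons,
        SimpleGraph.Walk.support_eq_cons p.reverse, SimpleGraph.Walk.support_eq_cons q.reverse]
        at h5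
      simp only [List.cons.injEq] at h5
      exact hac h5.2.1

lemma centers_dist_le_one [Fintype V] {T : SimpleGraph V} (hT : T.IsTree) {w w' : V}
    (hw : IsWeightCenter T w) (hw' : IsWeightCenter T w') : T.dist w w' ≤ 1 := by
  classical
  by_contra hk
  push_neg at hk
  obtain ⟨p, hppath, hpl⟩ := hT.isConnected.exists_path_of_dist w w'
  set k := T.dist w w' with hkdef
  have conv : ∀ i, i + 2 ≤ k →
      2 * (wt T (p.getVert (i+1)) : ℤ) + 2 ≤ (wt T (p.getVert i) : ℤ) + (wt T (p.getVert (i+2)) : ℤ) := by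
    intro i hi
    set va := p.getVert i
    set vb := p.getVert (i+1)
    set vc := p.getVert (i+2)
    have hi1 : i < p.length := by omega
    have hi2 : i + 1 < p.length := by omega
    have hadj1 : T.Adj vb va := (p.adj_getVert_succ hi1).symm
    have hadj2 : T.Adj vb vc := p.adj_getVert_succ hi2
    have hne : va ≠ vc := fun hh => by
      have := tree_getVert_injOn p hppath i (by omega) (i+2) (by omega) hh; omega
    have hmid : ∀ u : V, 2 * (T.dist u vb : ℤ) ≤ (T.dist u va : ℤ) + (T.dist u vc : ℤ) :=
      fun u => tree_midpoint hT hadj1 hadj2 hne u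
    have hwtcast : ∀ x : V, (wt T x : ℤ) = ∑ u : V, (T.dist u x : ℤ) := by
      intro x; simp [wt]
    rw [hwtcast, hwtcast, hwtcast]
    have e1 : ∀ x : V, ∑ u : V, (T.dist u x : ℤ)
        = (T.dist vb x : ℤ) + ∑ u ∈ Finset.univ.erase vb, (T.dist u x : ℤ) := by
      intro x
      exact (Finset.add_sum_erase _ (fun u => ((T.dist u x : ℤ))) (Finset.mem_univ vb)).symm
    rw [e1 va, e1 vb, e1 vc]
    have hb0 : T.dist vb vb = 0 := SimpleGraph.dist_self
    have hba1 : T.dist vb va = 1 := SimpleGraph.dist_eq_one_iff_adj.mpr hadj1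
    have hbc1 : T.dist vb vc = 1 := SimpleGraph.dist_eq_one_iff_adj.mpr hadj2
    have hsum : ∑ u ∈ Finset.univ.erase vb, 2 * (T.dist u vb : ℤ)
        ≤ ∑ u ∈ Finset.univ.erase vb, ((T.dist u va : ℤ) + (T.dist u vc : ℤ)) :=
      Finset.sum_le_sum fun u _ => hmid u
    rw [Finset.sum_add_distrib, ← Finset.mul_sum] at hsum
    rw [hb0, hba1, hbc1]
    push_cast
    linarith [hsum]
  have inc : ∀ i, i < k → (wt T (p.getVert i) : ℤ) + 2 * i ≤ (wt T (p.getVert (i+1)) : ℤ) := by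
    intro i
    induction i with
    | zero =>
      intro _
      have h0 : p.getVert 0 = w := p.getVert_zero
      rw [h0]
      push_cast
      have := hw (p.getVert 1)
      omega
    | succ i ih =>
      intro hik
      have h1 := ih (by omega)
      have h2 := conv i (by omega)
      push_cast
      push_cast at h1
      linarith
  have hfin := inc (k-1) (by omega)
  have hv : p.getVert ((k-1)+1) = w' := by
    have : (k-1)+1 = k := by omega
    rw [this, ← hpl]; exact p.getVert_length
  rw [hv] at hfin
  have hcen : (wt T w' : ℤ) ≤ (wt T (p.getVert (k-1)) : ℤ) := by
    exact_mod_cast hw' (p.getVert (k-1))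
  have hkc : (2:ℤ) ≤ 2 * ((k-1 : ℕ) : ℤ) := by
    have : (1:ℕ) ≤ k - 1 := by omega
    exact_mod_cast Nat.mul_le_mul_left 2 this
  linarith

section Levels
variable [Fintype V] {T : SimpleGraph V}

lemma exists_center (hT : T.IsTree) : ∃ w, IsWeightCenter T w := by
  have : Nonempty V := hT.isConnected.nonempty
  obtain ⟨w, -, hw⟩ := Finset.exists_min_image Finset.univ (wt T)
    ⟨Classical.arbitrary V, Finset.mem_univ _⟩
  exact ⟨w, fun x => hw x (Finset.mem_univ x)⟩

lemma exists_level_witness (hT : T.IsTree) (u : V) :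
    ∃ x, IsWeightCenter T x ∧ T.dist u x = level T u := by
  obtain ⟨w, hw⟩ := exists_center hT
  exact Nat.sInf_mem (⟨T.dist u w, w, hw, rfl⟩ :
    {n | ∃ x, IsWeightCenter T x ∧ T.dist u x = n}.Nonempty)

lemma key_dist (hT : T.IsTree) (u v : V) :
    (T.dist u v : ℤ) ≤ (level T u : ℤ) + (level T v : ℤ) + 1 := by
  obtain ⟨xu, hxu, hxu'⟩ := exists_level_witness hT u
  obtain ⟨xv, hxv, hxv'⟩ := exists_level_witness hT v
  have t1 : T.dist u v ≤ T.dist u xu + T.dist xu v := hT.isConnected.dist_triangle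
  have t2 : T.dist xu v ≤ T.dist xu xv + T.dist xv v := hT.isConnected.dist_triangle
  have t3 : T.dist xu xv ≤ 1 := centers_dist_le_one hT hxu hxv
  have t4 : T.dist xv v = T.dist v xv := SimpleGraph.dist_comm
  rw [← hxu', ← hxv']
  omega

lemma key_dist_one (hT : T.IsTree) (hcard : {v : V | IsWeightCenter T v}.ncard = 1)
    (u v : V) : (T.dist u v : ℤ) ≤ (level T u : ℤ) + (level T v : ℤ) := by
  obtain ⟨a, ha⟩ := Set.ncard_eq_one.mp hcard
  obtain ⟨xu, hxu, hxu'⟩ := exists_level_witness hT u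
  obtain ⟨xv, hxv, hxv'⟩ := exists_level_witness hT v
  have hua : xu = a := by
    have : xu ∈ {v : V | IsWeightCenter T v} := hxu
    rwa [ha, Set.mem_singleton_iff] at this
  have hva : xv = a := by
    have : xv ∈ {v : V | IsWeightCenter T v} := hxv
    rwa [ha, Set.mem_singleton_iff] at this
  have t1 : T.dist u v ≤ T.dist u xu + T.dist xu v := hT.isConnected.dist_triangle
  have t4 : T.dist xu v = T.dist v xv := by rw [hua, hva, SimpleGraph.dist_comm]
  rw [← hxu', ← hxv']
  omega

lemma level_eq_zero (hT : T.IsTree) {u : V} (h : level T u = 0) : IsWeightCenter T u := by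
  obtain ⟨x, hx, hx'⟩ := exists_level_witness hT u
  rw [h] at hx'
  have := (hT.isConnected.dist_eq_zero_iff (u := u) (v := x)).mp hx'
  rwa [this]

end Levels

end Aux

/-- the lower bound `rn(T) ≥ (n-1)(d+ε) - 2 L(T) + ε`, where `ε = 1`
if `T` has one weight center and `ε = 0` if it has two. -/
theorem radioNumber_tree_lower_bound_level {V : Type*} [Fintype V] (T : SimpleGraph V)
    (hT : T.IsTree) (hd : 2 ≤ T.diam) (ε : ℕ)
    (hε : ({v : V | IsWeightCenter T v}.ncard = 1 ∧ ε = 1) ∨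
          ({v : V | IsWeightCenter T v}.ncard = 2 ∧ ε = 0)) :
    ((Fintype.card V : ℤ) - 1) * ((T.diam : ℤ) + ε) - 2 * (totalLevel T : ℤ) + ε
      ≤ (radioNumber T : ℤ) := by
  classical
  have hconn := hT.isConnected
  have hd0 : T.diam ≠ 0 := by omega
  have hnt : Nontrivial V := T.nontrivial_of_diam_ne_zero hd0
  -- the set of radio labelings is nonempty
  have hne : {k | ∃ f : V → ℕ, IsRadioLabeling T f ∧ span f = k}.Nonempty := by
    have e := Fintype.equivFin V
    refine ⟨_, fun v => (T.diam + 1) * (e v : ℕ), fun u v huv => ?_, rfl⟩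
    have hne' : ((e u : ℕ) : ℤ) - ((e v : ℕ) : ℤ) ≠ 0 := by
      intro h
      exact huv (e.injective (Fin.ext (by exact_mod_cast sub_eq_zero.mp h)))
    have h1 : (1:ℤ) ≤ |((e u : ℕ) : ℤ) - ((e v : ℕ) : ℤ)| := Int.one_le_abs hne'
    have h2 : |((T.diam + 1) * (e u : ℕ) : ℤ) - ((T.diam + 1) * (e v : ℕ) : ℤ)|
        = ((T.diam : ℤ) + 1) * |((e u : ℕ) : ℤ) - ((e v : ℕ) : ℤ)| := by
      push_cast
      rw [← mul_sub, abs_mul, abs_of_nonneg (by positivity : (0:ℤ) ≤ (T.diam : ℤ) + 1)]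
    have h3 : (0:ℤ) ≤ (T.dist u v : ℤ) := by positivity
    push_cast
    push_cast at h2
    rw [h2]
    nlinarith [h1, h3]
  obtain ⟨f, hf, hspan⟩ : ∃ f, IsRadioLabeling T f ∧ span f = radioNumber T := Nat.sInf_mem hne
  -- f is injective
  have hinj : Function.Injective f := by
    intro u v huv
    by_contra hne'
    have h := hf u v hne'
    rw [huv, sub_self, abs_zero, add_zero] at h
    have hle : T.dist u v ≤ T.diam :=
      SimpleGraph.dist_le_diam (T.ediam_ne_top_of_diam_ne_zero hd0)
    omega
  set n := Fintype.card V with hn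
  have hn2 : 2 ≤ n := Fintype.one_lt_card
  -- order the vertices by label
  have hcs : (Finset.univ.image f).card = n := by
    rw [Finset.card_image_of_injective _ hinj, Finset.card_univ]
  set o := (Finset.univ.image f).orderIsoOfFin hcs with ho
  have hex : ∀ i : Fin n, ∃ v, f v = (o i : ℕ) := by
    intro i
    have h := (o i).2
    rw [Finset.mem_image] at h
    obtain ⟨v, -, hv⟩ := h
    exact ⟨v, hv⟩
  choose x hx using hex
  have hxinj : Function.Injective x := by
    intro i j hij
    have : (o i : ℕ) = (o j : ℕ) := by rw [← hx, ← hx, hij]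
    exact o.injective (Subtype.ext this)
  have hxmono : ∀ i j : Fin n, i < j → f (x i) < f (x j) := by
    intro i j hij
    rw [hx, hx]
    exact_mod_cast o.strictMono hij
  have hxbij : Function.Bijective x :=
    (Fintype.bijective_iff_injective_and_card x).mpr ⟨hxinj, by simp [hn]⟩
  -- ℕ-indexed version
  have hmem : ∀ i : ℕ, min i (n-1) < n := fun i => by omega
  set X : ℕ → V := fun i => x ⟨min i (n-1), hmem i⟩ with hX
  set F : ℕ → ℤ := fun i => (f (X i) : ℤ) with hF
  set Lv : ℕ → ℤ := fun i => (level T (X i) : ℤ) with hLv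
  have hXlt : ∀ i, ∀ _h : i ≤ n - 1, X i = x ⟨i, by omega⟩ := by
    intro i hi
    simp only [hX]
    exact congrArg x (Fin.ext (show min i (n - 1) = i by omega))
  -- main step bound
  have step : ∀ i ∈ Finset.range (n-1),
      (T.diam : ℤ) + ε - Lv i - Lv (i+1) ≤ F (i+1) - F i := by
    intro i hi
    rw [Finset.mem_range] at hi
    have hXi : X i = x ⟨i, by omega⟩ := hXlt i (by omega)
    have hXi1 : X (i+1) = x ⟨i+1, by omega⟩ := hXlt (i+1) (by omega)
    have hneq : X i ≠ X (i+1) := by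
      rw [hXi, hXi1]
      intro h
      have := hxinj h
      simp only [Fin.mk.injEq] at this
      omega
    have hlt : f (X i) < f (X (i+1)) := by
      rw [hXi, hXi1]
      exact hxmono _ _ (by simp [Fin.mk_lt_mk])
    have hrad := hf (X i) (X (i+1)) hneq
    have habs : |(f (X i) : ℤ) - (f (X (i+1)) : ℤ)| = F (i+1) - F i := by
      rw [abs_sub_comm, abs_of_nonneg (by simp only [sub_nonneg]; exact_mod_cast hlt.le :
        (0:ℤ) ≤ (f (X (i+1)) : ℤ) - (f (X i) : ℤ))]
    rw [habs] at hrad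
    rcases hε with ⟨h1, he⟩ | ⟨h2, he⟩ <;> subst he
    · have := key_dist_one hT h1 (X i) (X (i+1))
      simp only [Lv]
      push_cast
      linarith
    · have := key_dist hT (X i) (X (i+1))
      simp only [Lv]
      push_cast
      linarith
  -- telescoping
  have htel : ∑ i ∈ Finset.range (n-1), (F (i+1) - F i) = F (n-1) - F 0 :=
    Finset.sum_range_sub F (n-1)
  have hlb : ∑ i ∈ Finset.range (n-1), ((T.diam : ℤ) + ε - Lv i - Lv (i+1))
      ≤ F (n-1) - F 0 := by
    rw [← htel]
    exact Finset.sum_le_sum step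
  -- compute the sum of levels
  have hsum_all : ∑ i ∈ Finset.range n, Lv i = (totalLevel T : ℤ) := by
    rw [← Fin.sum_univ_eq_sum_range]
    have : ∀ i : Fin n, Lv i.val = (level T (x i) : ℤ) := by
      intro i
      have hxx : X i.val = x i := by
        rw [hXlt i.val (by omega)]
      simp only [Lv, hxx]
    rw [Finset.sum_congr rfl fun i _ => this i]
    rw [show (totalLevel T : ℤ) = ∑ v : V, (level T v : ℤ) by simp [totalLevel]]
    exact Fintype.sum_bijective x hxbij _ _ (fun i => rfl)
  have hn1 : n - 1 + 1 = n := by omega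
  have hsum1 : ∑ i ∈ Finset.range (n-1), Lv i = (totalLevel T : ℤ) - Lv (n-1) := by
    have := Finset.sum_range_succ Lv (n-1)
    rw [hn1, hsum_all] at this
    linarith
  have hsum2 : ∑ i ∈ Finset.range (n-1), Lv (i+1) = (totalLevel T : ℤ) - Lv 0 := by
    have := Finset.sum_range_succ' Lv (n-1)
    rw [hn1, hsum_all] at this
    linarith
  have hsplit : ∑ i ∈ Finset.range (n-1), ((T.diam : ℤ) + ε - Lv i - Lv (i+1))
      = (n-1 : ℕ) * ((T.diam : ℤ) + ε) - (2 * (totalLevel T : ℤ) - Lv 0 - Lv (n-1)) := by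
    rw [Finset.sum_sub_distrib, Finset.sum_sub_distrib, Finset.sum_const, Finset.card_range,
      hsum1, hsum2]
    push_cast
    ring
  -- the epsilon bonus
  have hbonus : (ε : ℤ) ≤ Lv 0 + Lv (n-1) := by
    rcases hε with ⟨h1, he⟩ | ⟨h2, he⟩ <;> subst he
    · by_contra hcon
      push_neg at hcon
      have hLv0 : (0:ℤ) ≤ Lv 0 := by simp only [Lv]; positivity
      have hLv1 : (0:ℤ) ≤ Lv (n-1) := by simp only [Lv]; positivity
      have hz0 : level T (X 0) = 0 := by
        have h' : Lv 0 = 0 := by omega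
        simpa [hLv] using h'
      have hz1 : level T (X (n-1)) = 0 := by
        have h' : Lv (n-1) = 0 := by omega
        simpa [hLv] using h'
      have hc0 := level_eq_zero hT hz0
      have hc1 := level_eq_zero hT hz1
      obtain ⟨a, ha⟩ := Set.ncard_eq_one.mp h1
      have e0 : X 0 = a := by
        have : X 0 ∈ {v : V | IsWeightCenter T v} := hc0
        rwa [ha, Set.mem_singleton_iff] at this
      have e1 : X (n-1) = a := by
        have : X (n-1) ∈ {v : V | IsWeightCenter T v} := hc1
        rwa [ha, Set.mem_singleton_iff] at this
      have hX0 : X 0 = x ⟨0, by omega⟩ := hXlt 0 (by omega)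
      have hX1 : X (n-1) = x ⟨n-1, by omega⟩ := hXlt (n-1) (by omega)
      have : (⟨0, by omega⟩ : Fin n) = ⟨n-1, by omega⟩ := by
        apply hxinj
        rw [← hX0, ← hX1, e0, e1]
      simp only [Fin.mk.injEq] at this
      omega
    · have hLv0 : (0:ℤ) ≤ Lv 0 := by simp only [Lv]; positivity
      have hLv1 : (0:ℤ) ≤ Lv (n-1) := by simp only [Lv]; positivity
      push_cast
      omega
  -- finish
  have hF0 : (0:ℤ) ≤ F 0 := by simp only [F]; positivity
  have hFtop : F (n-1) ≤ (radioNumber T : ℤ) := by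
    rw [← hspan]
    have h' : f (X (n-1)) ≤ span f := Finset.le_sup (Finset.mem_univ (X (n-1)))
    simp only [hF]
    exact_mod_cast h'
  have hcast : ((n-1 : ℕ) : ℤ) = (n : ℤ) - 1 := by
    push_cast [Nat.cast_sub (by omega : 1 ≤ n)]
    ring
  rw [hsplit, hcast] at hlb
  rw [hn]
  linarith
end

section
/- The radio number of the path P_{2k} on 2k vertices (k ≥ 2) equals 2k(k-1) + 1, and this equals the lower bound (n-1)(d+ε) - 2L(T) + ε with n = 2k, d = 2k-1, ε = 0. -/
open Finset

open RadioNr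

open SimpleGraph

namespace RadioAux

lemma path_exists_walk (n : ℕ) : ∀ (d : ℕ) (u v : Fin n), u.val + d = v.val →
    ∃ w : (pathGraph n).Walk u v, w.length = d := by
  intro d
  induction d with
  | zero =>
    intro u v h
    have : u = v := Fin.ext (by omega)
    subst this; exact ⟨.nil, rfl⟩
  | succ d ih =>
    intro u v h
    have hv := v.isLt
    have hu1 : u.val + 1 < n := by omega
    have hadj : (pathGraph n).Adj u ⟨u.val + 1, hu1⟩ := pathGraph_adj.mpr (Or.inl rfl)
    obtain ⟨w, hw⟩ := ih ⟨u.val + 1, hu1⟩ v (by simp; omega)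
    exact ⟨.cons hadj w, by simp [hw]⟩

lemma path_walk_length_ge {n : ℕ} {u v : Fin n} (w : (pathGraph n).Walk u v) :
    (u.val : ℤ) - v.val ≤ w.length ∧ (v.val : ℤ) - u.val ≤ w.length := by
  induction w with
  | nil => simp
  | @cons a b c h p ih =>
    rw [pathGraph_adj] at h
    rw [SimpleGraph.Walk.length_cons]
    obtain ⟨ih1, ih2⟩ := ih
    constructor <;> push_cast <;> omega

lemma path_connected {n : ℕ} (hn : 1 ≤ n) : (pathGraph n).Connected := by
  have h : n - 1 + 1 = n := Nat.succ_pred_eq_of_pos hn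
  rw [← h]
  exact pathGraph_connected (n - 1)

lemma path_dist_le {n : ℕ} (a b : Fin n) (h : a.val ≤ b.val) :
    (pathGraph n).dist a b ≤ b.val - a.val := by
  obtain ⟨w, hw⟩ := path_exists_walk n (b.val - a.val) a b (by omega)
  have := SimpleGraph.dist_le w
  omega

lemma path_dist {n : ℕ} (hn : 1 ≤ n) (u v : Fin n) :
    ((pathGraph n).dist u v : ℤ) = |(u.val : ℤ) - v.val| := by
  have hc := path_connected hn
  obtain ⟨p, hp⟩ := hc.exists_walk_length_eq_dist u v
  have hge := path_walk_length_ge p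
  rw [hp] at hge
  obtain ⟨hge1, hge2⟩ := hge
  have hle : (pathGraph n).dist u v ≤ max u.val v.val - min u.val v.val := by
    rcases le_total u.val v.val with h | h
    · have := path_dist_le u v h; omega
    · have := path_dist_le v u h; rw [SimpleGraph.dist_comm] at this; omega
  rcases abs_cases ((u.val : ℤ) - (v.val : ℤ)) with ⟨h1, h2⟩ | ⟨h1, h2⟩ <;> rw [h1] <;> omega

lemma path_dist_nat {n : ℕ} (hn : 1 ≤ n) (u v : Fin n) :
    (pathGraph n).dist u v = max u.val v.val - min u.val v.val := by
  have := path_dist hn u v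
  rcases abs_cases ((u.val : ℤ) - (v.val : ℤ)) with ⟨h1, h2⟩ | ⟨h1, h2⟩ <;> rw [h1] at this <;> omega

lemma path_ediam_ne_top {n : ℕ} (hn : 1 ≤ n) : (pathGraph n).ediam ≠ ⊤ := by
  have h : (pathGraph n).ediam ≤ ((n - 1 : ℕ) : ℕ∞) := by
    apply SimpleGraph.ediam_le_of_edist_le
    intro u v
    rcases le_total u.val v.val with h | h
    · obtain ⟨w, hw⟩ := path_exists_walk n (v.val - u.val) u v (by omega)
      have h' : w.length ≤ n - 1 := by have := v.isLt; omega
      calc (pathGraph n).edist u v ≤ w.length := SimpleGraph.edist_le w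
        _ ≤ ((n - 1 : ℕ) : ℕ∞) := by exact_mod_cast h'
    · obtain ⟨w, hw⟩ := path_exists_walk n (u.val - v.val) v u (by omega)
      have h' : w.length ≤ n - 1 := by have := u.isLt; omega
      rw [SimpleGraph.edist_comm]
      calc (pathGraph n).edist v u ≤ w.length := SimpleGraph.edist_le w
        _ ≤ ((n - 1 : ℕ) : ℕ∞) := by exact_mod_cast h'
  intro ht
  rw [ht, top_le_iff] at h
  exact (ENat.coe_ne_top _) h

lemma path_diam {n : ℕ} (hn : 1 ≤ n) : (pathGraph n).diam = n - 1 := by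
  have hne := path_ediam_ne_top hn
  have hnonempty : Nonempty (Fin n) := ⟨⟨0, by omega⟩⟩
  apply le_antisymm
  · obtain ⟨u, v, huv⟩ := SimpleGraph.exists_dist_eq_diam (G := pathGraph n)
    rw [← huv]
    have hd := path_dist hn u v
    have hu := u.isLt; have hv := v.isLt
    rcases abs_cases ((u.val : ℤ) - (v.val : ℤ)) with ⟨h1, h2⟩ | ⟨h1, h2⟩ <;> rw [h1] at hd <;> omega
  · have h2 : (pathGraph n).dist ⟨0, by omega⟩ ⟨n-1, by omega⟩ = n - 1 := by
      rw [path_dist_nat hn]; simp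
    rw [← h2]
    exact SimpleGraph.dist_le_diam hne

/-! ### Weight and level computations -/


lemma sumTo (m : ℕ) : 2 * ∑ i ∈ Finset.range m, (m - i) = m * (m + 1) := by
  induction m with
  | zero => simp
  | succ m ih =>
    have h : ∑ i ∈ Finset.range (m+1), (m + 1 - i) = (∑ i ∈ Finset.range m, (m - i)) + (m + 1) := by
      rw [Finset.sum_range_succ]
      have hc : ∀ i ∈ Finset.range m, m + 1 - i = (m - i) + 1 := fun i hi => by
        have := Finset.mem_range.mp hi; omega
      rw [Finset.sum_congr rfl hc, Finset.sum_add_distrib, Finset.sum_const, Finset.card_range]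
      simp; omega
    rw [h]
    nlinarith [ih]

lemma sum_dist (n pv : ℕ) (h : pv < n) :
    2 * ∑ i ∈ Finset.range n, (if i < pv then pv - i else i - pv)
      = pv * (pv + 1) + (n - pv) * (n - pv - 1) := by
  rw [Finset.range_eq_Ico, ← Finset.sum_Ico_consecutive _ (Nat.zero_le pv) h.le]
  have h1 : ∑ i ∈ Finset.Ico 0 pv, (if i < pv then pv - i else i - pv)
      = ∑ i ∈ Finset.range pv, (pv - i) := by
    rw [← Finset.range_eq_Ico]
    exact Finset.sum_congr rfl (fun i hi => by rw [if_pos (Finset.mem_range.mp hi)])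
  have h2 : ∑ i ∈ Finset.Ico pv n, (if i < pv then pv - i else i - pv)
      = ∑ j ∈ Finset.range (n - pv), j := by
    rw [Finset.sum_Ico_eq_sum_range]
    exact Finset.sum_congr rfl fun j hj => by rw [if_neg (by omega)]; omega
  rw [h1, h2]
  have g1 := sumTo pv
  have g2 := Finset.sum_range_id_mul_two (n - pv)
  omega

lemma path_dist_ite {n : ℕ} (hn : 1 ≤ n) (u v : Fin n) :
    (pathGraph n).dist u v = (if u.val < v.val then v.val - u.val else u.val - v.val) := by
  rw [path_dist_nat hn]
  split_ifs <;> omega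

lemma wt_path (k : ℕ) (hk : 1 ≤ k) (p : Fin (2*k)) :
    2 * wt (pathGraph (2*k)) p = p.val * (p.val + 1) + (2*k - p.val) * (2*k - p.val - 1) := by
  have h1 : wt (pathGraph (2*k)) p
      = ∑ i ∈ Finset.range (2*k), (if i < p.val then p.val - i else i - p.val) := by
    rw [wt, ← Fin.sum_univ_eq_sum_range (fun i => if i < p.val then p.val - i else i - p.val) (2*k)]
    apply Finset.sum_congr rfl
    intro u _
    rw [path_dist_nat (by omega)]
    split_ifs <;> omega
  rw [h1, sum_dist (2*k) p.val p.isLt]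

lemma wt_path_int (k : ℕ) (hk : 1 ≤ k) (p : Fin (2*k)) :
    2 * (wt (pathGraph (2*k)) p : ℤ) =
      (p.val : ℤ) * (p.val + 1) + (2*k - p.val) * (2*k - p.val - 1) := by
  have h := wt_path k hk p
  have h1 : p.val ≤ 2*k := p.isLt.le
  have h2 : 1 ≤ 2*k - p.val := by have := p.isLt; omega
  zify [h1, h2] at h
  linarith [h]

lemma center_iff (k : ℕ) (hk : 2 ≤ k) (x : Fin (2*k)) :
    IsWeightCenter (pathGraph (2*k)) x ↔ x.val = k - 1 ∨ x.val = k := by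
  have hck : k < 2*k := by omega
  have wc2 := wt_path_int k (by omega) ⟨k, hck⟩
  constructor
  · intro h
    have hle := h ⟨k, hck⟩
    have wx := wt_path_int k (by omega) x
    have hxlt := x.isLt
    by_contra hc
    push_neg at hc
    obtain ⟨hc1, hc2⟩ := hc
    have hcase : (x.val : ℤ) ≤ (k : ℤ) - 2 ∨ (k : ℤ) + 1 ≤ (x.val : ℤ) := by omega
    have hle' : (wt (pathGraph (2*k)) x : ℤ) ≤ (wt (pathGraph (2*k)) ⟨k, hck⟩ : ℤ) := by
      exact_mod_cast hle
    rcases hcase with hcase | hcase <;> nlinarith [wx, wc2, hle', hxlt]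
  · intro h y
    have wx := wt_path_int k (by omega) x
    have wy := wt_path_int k (by omega) y
    have hxlt := x.isLt
    have hylt := y.isLt
    have key : (wt (pathGraph (2*k)) x : ℤ) ≤ (wt (pathGraph (2*k)) y : ℤ) := by
      have hx : (x.val : ℤ) = (k : ℤ) - 1 ∨ (x.val : ℤ) = (k : ℤ) := by omega
      have hy : (y.val : ℤ) ≤ (k : ℤ) - 1 ∨ (k : ℤ) ≤ (y.val : ℤ) := by omega
      rcases hx with hx | hx <;> rcases hy with hy | hy <;> nlinarith [wx, wy]
    exact_mod_cast key

lemma level_path (k : ℕ) (hk : 2 ≤ k) (u : Fin (2*k)) :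
    level (pathGraph (2*k)) u = (if u.val < k then k - 1 - u.val else u.val - k) := by
  have hn : (1:ℕ) ≤ 2*k := by omega
  have hc1 : k - 1 < 2*k := by omega
  have hc2 : k < 2*k := by omega
  have hmem : (if u.val < k then k - 1 - u.val else u.val - k)
      ∈ {n | ∃ x, IsWeightCenter (pathGraph (2*k)) x ∧ (pathGraph (2*k)).dist u x = n} := by
    by_cases h : u.val < k
    · refine ⟨⟨k-1, hc1⟩, (center_iff k hk _).mpr (Or.inl rfl), ?_⟩
      rw [path_dist_nat hn, if_pos h]
      simp only [Fin.val_mk]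
      omega
    · refine ⟨⟨k, hc2⟩, (center_iff k hk _).mpr (Or.inr rfl), ?_⟩
      rw [path_dist_nat hn, if_neg h]
      simp only [Fin.val_mk]
      omega
  rw [level]
  apply le_antisymm
  · exact Nat.sInf_le hmem
  · have hne : {n | ∃ x, IsWeightCenter (pathGraph (2*k)) x ∧ (pathGraph (2*k)).dist u x = n}.Nonempty :=
      ⟨_, hmem⟩
    obtain ⟨x, hxc, hdx⟩ := Nat.sInf_mem hne
    rw [center_iff k hk] at hxc
    rw [path_dist_nat hn] at hdx
    have := u.isLt
    split_ifs with h <;> omega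

lemma totalLevel_path (k : ℕ) (hk : 2 ≤ k) :
    totalLevel (pathGraph (2*k)) = k * (k - 1) := by
  rw [totalLevel, Finset.sum_congr rfl (fun u _ => level_path k hk u)]
  rw [Fin.sum_univ_eq_sum_range (fun i => if i < k then k - 1 - i else i - k) (2*k)]
  rw [Finset.range_eq_Ico, ← Finset.sum_Ico_consecutive _ (Nat.zero_le k) (by omega : k ≤ 2*k)]
  have h1 : ∑ i ∈ Finset.Ico 0 k, (if i < k then k - 1 - i else i - k)
      = ∑ i ∈ Finset.range k, i := by
    rw [← Finset.range_eq_Ico, ← Finset.sum_range_reflect (fun i => i) k]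
    exact Finset.sum_congr rfl fun i hi => by
      have := Finset.mem_range.mp hi; rw [if_pos this]
  have h2 : ∑ i ∈ Finset.Ico k (2*k), (if i < k then k - 1 - i else i - k)
      = ∑ j ∈ Finset.range k, j := by
    rw [Finset.sum_Ico_eq_sum_range]
    have : 2*k - k = k := by omega
    rw [this]
    exact Finset.sum_congr rfl fun j hj => by rw [if_neg (by omega)]; omega
  rw [h1, h2]
  have g := Finset.sum_range_id_mul_two k
  omega

/-! ### The optimal labeling -/

def lab (k : ℕ) : Fin (2*k) → ℕ := fun p =>
  if p.val < k then (k - 1 - p.val) * (2*k - 1) else (2*k - 1 - p.val) * (2*k - 1) + k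

lemma lab_left (k : ℕ) (hk : 2 ≤ k) (p : Fin (2*k)) (h : p.val < k) :
    (lab k p : ℤ) = ((k : ℤ) - 1 - p.val) * (2*(k:ℤ) - 1) := by
  rw [lab, if_pos h]
  have h1 : p.val ≤ k - 1 := by omega
  push_cast [h1, Nat.cast_sub]
  have : ((k - 1 : ℕ) : ℤ) = (k : ℤ) - 1 := by omega
  rw [this]
  have h2 : ((2*k - 1 : ℕ) : ℤ) = 2*(k:ℤ) - 1 := by omega
  rw [h2]

lemma lab_right (k : ℕ) (hk : 2 ≤ k) (p : Fin (2*k)) (h : ¬ p.val < k) :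
    (lab k p : ℤ) = (2*(k:ℤ) - 1 - p.val) * (2*(k:ℤ) - 1) + k := by
  rw [lab, if_neg h]
  have hp := p.isLt
  have h1 : p.val ≤ 2*k - 1 := by omega
  push_cast [h1, Nat.cast_sub]
  have h2 : ((2*k - 1 : ℕ) : ℤ) = 2*(k:ℤ) - 1 := by omega
  rw [h2]

set_option maxHeartbeats 1000000 in
lemma lab_radio_aux (k : ℕ) (hk : 2 ≤ k) (u v : Fin (2*k)) (huv : u.val < v.val) :
    (2*(k:ℤ)) ≤ ((pathGraph (2*k)).dist u v : ℤ) + |(lab k u : ℤ) - (lab k v : ℤ)| := by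
  have hn : (1:ℕ) ≤ 2*k := by omega
  have hdist : ((pathGraph (2*k)).dist u v : ℤ) = (v.val : ℤ) - (u.val : ℤ) := by
    rw [path_dist hn, abs_of_nonpos (show (u.val : ℤ) - (v.val : ℤ) ≤ 0 by omega)]
    ring
  have hu := u.isLt
  have hv := v.isLt
  rw [hdist]
  by_cases hak : u.val < k
  · by_cases hbk : v.val < k
    · -- both left
      have e1 := lab_left k hk u hak
      have e2 := lab_left k hk v hbk
      have h3 : (lab k u : ℤ) - lab k v = ((v.val:ℤ) - (u.val:ℤ)) * (2*(k:ℤ) - 1) := by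
        rw [e1, e2]; ring
      have h4 : (1:ℤ) ≤ (v.val:ℤ) - (u.val:ℤ) := by omega
      have hkz : (2:ℤ) ≤ (k:ℤ) := by omega
      have hint : (0:ℤ) ≤ ((v.val:ℤ) - (u.val:ℤ) - 1) * (2*(k:ℤ) - 1) :=
        mul_nonneg (by omega) (by omega)
      have habs : |((v.val:ℤ) - (u.val:ℤ)) * (2*(k:ℤ) - 1)|
          = ((v.val:ℤ) - (u.val:ℤ)) * (2*(k:ℤ) - 1) := abs_of_nonneg (by nlinarith [hint])
      rw [h3, habs]
      nlinarith [hint]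
    · -- cross
      have e1 := lab_left k hk u hak
      have e2 := lab_right k hk v hbk
      set m : ℤ := (v.val : ℤ) - (u.val : ℤ) - (k : ℤ) with hm
      have h3 : (lab k u : ℤ) - lab k v = m * (2*(k:ℤ) - 1) - k := by
        rw [e1, e2, hm]; ring
      rw [h3]
      have hm1 : -((k:ℤ) - 1) ≤ m := by
        have h5 : (1:ℤ) ≤ (v.val:ℤ) - (u.val:ℤ) := by omega
        omega
      have hkz : (2:ℤ) ≤ (k:ℤ) := by omega
      rcases le_or_gt m 0 with hm0 | hm0
      · have hint1 : (0:ℤ) ≤ (-m) * (2*(k:ℤ) - 1) :=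
          mul_nonneg (by omega) (by omega)
        have hint2 : (0:ℤ) ≤ (-m) * (2*(k:ℤ) - 2) :=
          mul_nonneg (by omega) (by omega)
        have habs : |m * (2*(k:ℤ) - 1) - (k:ℤ)| = -(m * (2*(k:ℤ) - 1) - (k:ℤ)) :=
          abs_of_nonpos (by nlinarith [hint1])
        rw [habs]
        nlinarith [hint2]
      · have hm2 : (1:ℤ) ≤ m := hm0
        have hint1 : (0:ℤ) ≤ (m - 1) * (2*(k:ℤ) - 1) :=
          mul_nonneg (by omega) (by omega)
        have hint2 : (0:ℤ) ≤ (m - 1) * (2*(k:ℤ)) :=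
          mul_nonneg (by omega) (by omega)
        have habs : |m * (2*(k:ℤ) - 1) - (k:ℤ)| = m * (2*(k:ℤ) - 1) - (k:ℤ) :=
          abs_of_nonneg (by nlinarith [hint1])
        rw [habs]
        nlinarith [hint2]
  · -- both right (u ≥ k forces v ≥ k)
    have hbk : ¬ v.val < k := by omega
    have e1 := lab_right k hk u hak
    have e2 := lab_right k hk v hbk
    have h3 : (lab k u : ℤ) - lab k v = ((v.val:ℤ) - (u.val:ℤ)) * (2*(k:ℤ) - 1) := by
      rw [e1, e2]; ring
    have h4 : (1:ℤ) ≤ (v.val:ℤ) - (u.val:ℤ) := by omega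
    have hkz : (2:ℤ) ≤ (k:ℤ) := by omega
    have hint : (0:ℤ) ≤ ((v.val:ℤ) - (u.val:ℤ) - 1) * (2*(k:ℤ) - 1) :=
      mul_nonneg (by omega) (by omega)
    have habs : |((v.val:ℤ) - (u.val:ℤ)) * (2*(k:ℤ) - 1)|
        = ((v.val:ℤ) - (u.val:ℤ)) * (2*(k:ℤ) - 1) := abs_of_nonneg (by nlinarith [hint])
    rw [h3, habs]
    nlinarith [hint]

lemma lab_radio (k : ℕ) (hk : 2 ≤ k) : IsRadioLabeling (pathGraph (2*k)) (lab k) := by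
  intro u v hne
  have hd : (pathGraph (2*k)).diam = 2*k - 1 := path_diam (by omega)
  have hcast : ((pathGraph (2*k)).diam : ℤ) + 1 = 2*(k:ℤ) := by rw [hd]; omega
  rw [hcast]
  rcases lt_trichotomy u.val v.val with h | h | h
  · exact lab_radio_aux k hk u v h
  · exact absurd (Fin.ext h) hne
  · have := lab_radio_aux k hk v u h
    rwa [SimpleGraph.dist_comm, abs_sub_comm] at this

lemma lab_val_k (k : ℕ) (hk : 2 ≤ k) :
    lab k ⟨k, by omega⟩ = 2*k*(k-1) + 1 := by
  rw [lab, if_neg (by simp)]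
  simp only [Fin.val_mk]
  have h0 : 2*k - 1 - k = k - 1 := by omega
  rw [h0]
  zify [show 1 ≤ k by omega, show 1 ≤ 2*k by omega]
  ring

lemma lab_le (k : ℕ) (hk : 2 ≤ k) (p : Fin (2*k)) : lab k p ≤ 2*k*(k-1) + 1 := by
  have hp := p.isLt
  have key : (lab k p : ℤ) ≤ 2*(k:ℤ)*((k:ℤ)-1) + 1 := by
    by_cases h : p.val < k
    · rw [lab_left k hk p h]
      have : (0:ℤ) ≤ p.val := by positivity
      nlinarith
    · rw [lab_right k hk p h]
      have h2 : (k:ℤ) ≤ p.val := by exact_mod_cast not_lt.mp h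
      nlinarith
  have hcast : ((2*k*(k-1) + 1 : ℕ) : ℤ) = 2*(k:ℤ)*((k:ℤ)-1) + 1 := by
    push_cast [show 1 ≤ k by omega]
    ring
  rw [← hcast] at key
  exact_mod_cast key

lemma lab_span (k : ℕ) (hk : 2 ≤ k) : span (lab k) = 2*k*(k-1) + 1 := by
  rw [span]
  apply le_antisymm
  · exact Finset.sup_le fun p _ => lab_le k hk p
  · calc 2*k*(k-1) + 1 = lab k ⟨k, by omega⟩ := (lab_val_k k hk).symm
      _ ≤ Finset.univ.sup (lab k) := Finset.le_sup (Finset.mem_univ _)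

/-! ### Lower bound -/

def Dv (k : ℕ) (p : Fin (2*k)) : ℕ := if p.val < k then k - 1 - p.val else p.val - k

lemma dist_le_Dv (k : ℕ) (hk : 2 ≤ k) (x y : Fin (2*k)) :
    (pathGraph (2*k)).dist x y ≤ Dv k x + Dv k y + 1 := by
  rw [path_dist_nat (by omega), Dv, Dv]
  have hx := x.isLt
  have hy := y.isLt
  split_ifs <;> omega

lemma sumDv (k : ℕ) (hk : 2 ≤ k) : ∑ p : Fin (2*k), Dv k p = k * (k-1) := by
  have h : ∀ p : Fin (2*k), Dv k p = level (pathGraph (2*k)) p := fun p => by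
    rw [Dv, level_path k hk]
  rw [Finset.sum_congr rfl (fun p _ => h p)]
  exact totalLevel_path k hk

set_option maxHeartbeats 1000000 in
lemma radio_lower (k : ℕ) (hk : 2 ≤ k) (f : Fin (2*k) → ℕ)
    (hf : IsRadioLabeling (pathGraph (2*k)) f) : 2*k*(k-1) + 1 ≤ span f := by
  have hd : (pathGraph (2*k)).diam = 2*k - 1 := path_diam (by omega)
  set σ := Tuple.sort f with hσ
  have hmono : Monotone (f ∘ σ) := Tuple.monotone_sort f
  set y : ℕ → Fin (2*k) := fun i => σ ⟨min i (2*k-1), by omega⟩ with hy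
  have hyval : ∀ (i : ℕ) (h : i < 2*k), y i = σ ⟨i, h⟩ := by
    intro i h
    have e : (⟨min i (2*k-1), by omega⟩ : Fin (2*k)) = ⟨i, h⟩ :=
      Fin.ext (show min i (2*k-1) = i by omega)
    simp only [hy]
    exact congrArg σ e
  -- each step
  have step : ∀ i, i < 2*k - 1 →
      (2*(k:ℤ) - 1) - (Dv k (y i) : ℤ) - (Dv k (y (i+1)) : ℤ) ≤ (f (y (i+1)) : ℤ) - (f (y i) : ℤ) := by
    intro i hi
    have hia : i < 2*k := by omega
    have hib : i + 1 < 2*k := by omega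
    have ea := hyval i hia
    have eb := hyval (i+1) hib
    have hne : y i ≠ y (i+1) := by
      rw [ea, eb]
      intro h
      have := σ.injective h
      simp at this
    have hrad := hf (y i) (y (i+1)) hne
    rw [hd] at hrad
    have hmle : f (y i) ≤ f (y (i+1)) := by
      rw [ea, eb]
      exact hmono (by simp [Fin.le_def])
    have habs : |(f (y i) : ℤ) - (f (y (i+1)) : ℤ)| = (f (y (i+1)) : ℤ) - (f (y i) : ℤ) := by
      rw [abs_sub_comm]
      exact abs_of_nonneg (by omega)
    rw [habs] at hrad
    have hdle := dist_le_Dv k hk (y i) (y (i+1))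
    omega
  -- telescoping
  have tel := Finset.sum_range_sub (fun i => (f (y i) : ℤ)) (2*k-1)
  have main : ∑ i ∈ Finset.range (2*k-1),
      ((2*(k:ℤ) - 1) - (Dv k (y i) : ℤ) - (Dv k (y (i+1)) : ℤ))
      ≤ ∑ i ∈ Finset.range (2*k-1), ((f (y (i+1)) : ℤ) - (f (y i) : ℤ)) :=
    Finset.sum_le_sum (fun i hi => step i (Finset.mem_range.mp hi))
  rw [tel] at main
  -- the full sum of Dv over all vertices
  have hS0 : ∑ i ∈ Finset.range (2*k), (Dv k (y i) : ℤ) = ((k * (k-1) : ℕ) : ℤ) := by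
    rw [← Fin.sum_univ_eq_sum_range (fun i => (Dv k (y i) : ℤ)) (2*k)]
    have e : ∀ j : Fin (2*k), y j.val = σ j := fun j => by
      rw [hyval j.val j.isLt]
    rw [Finset.sum_congr rfl (fun j _ => by rw [e j])]
    rw [Equiv.sum_comp σ (fun p => (Dv k p : ℤ))]
    rw [← Nat.cast_sum]
    exact_mod_cast congrArg (Nat.cast : ℕ → ℤ) (sumDv k hk)
  have hS1 : ∑ i ∈ Finset.range (2*k-1), (Dv k (y i) : ℤ) ≤ ((k * (k-1) : ℕ) : ℤ) := by
    rw [← hS0]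
    apply Finset.sum_le_sum_of_subset_of_nonneg
    · exact Finset.range_subset_range.mpr (by omega)
    · intro i _ _; positivity
  have hS2 : ∑ i ∈ Finset.range (2*k-1), (Dv k (y (i+1)) : ℤ) ≤ ((k * (k-1) : ℕ) : ℤ) := by
    have hre : ∑ i ∈ Finset.range (2*k-1), (Dv k (y (i+1)) : ℤ)
        = ∑ i ∈ Finset.Ico 1 (2*k), (Dv k (y i) : ℤ) := by
      rw [Finset.sum_Ico_eq_sum_range]
      apply Finset.sum_congr rfl
      intro i _
      rw [Nat.add_comm 1 i]
    have hsub : ∑ i ∈ Finset.Ico 1 (2*k), (Dv k (y i) : ℤ)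
        ≤ ∑ i ∈ Finset.range (2*k), (Dv k (y i) : ℤ) := by
      apply Finset.sum_le_sum_of_subset_of_nonneg
      · intro i hi; rw [Finset.mem_range]; exact (Finset.mem_Ico.mp hi).2
      · intro i _ _; positivity
    rw [hre, ← hS0]
    exact hsub
  have hsum : ∑ i ∈ Finset.range (2*k-1),
      ((2*(k:ℤ) - 1) - (Dv k (y i) : ℤ) - (Dv k (y (i+1)) : ℤ))
      = ((2*k-1 : ℕ) : ℤ) * (2*(k:ℤ)-1)
        - (∑ i ∈ Finset.range (2*k-1), (Dv k (y i):ℤ))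
        - (∑ i ∈ Finset.range (2*k-1), (Dv k (y (i+1)):ℤ)) := by
    rw [Finset.sum_sub_distrib, Finset.sum_sub_distrib, Finset.sum_const, Finset.card_range,
      nsmul_eq_mul]
  have hspan : (f (y (2*k-1)) : ℤ) ≤ (span f : ℤ) := by
    have : f (y (2*k-1)) ≤ span f := by
      rw [span]; exact Finset.le_sup (Finset.mem_univ _)
    exact_mod_cast this
  have h0 : (0:ℤ) ≤ (f (y 0) : ℤ) := by positivity
  have hcard : ((2*k-1 : ℕ) : ℤ) = 2*(k:ℤ)-1 := by omega
  have hkk : ((k*(k-1) : ℕ) : ℤ) = (k:ℤ)*((k:ℤ)-1) := by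
    push_cast [show 1 ≤ k by omega]; ring
  rw [hsum, hcard] at main
  rw [hkk] at hS1 hS2
  have goalZ : ((2*k*(k-1)+1 : ℕ) : ℤ) ≤ (span f : ℤ) := by
    have hgc : ((2*k*(k-1)+1 : ℕ) : ℤ) = 2*(k:ℤ)*((k:ℤ)-1)+1 := by
      push_cast [show 1 ≤ k by omega]; ring
    rw [hgc]
    nlinarith [main, hS1, hS2, hspan, h0]
  exact_mod_cast goalZ

end RadioAux

open RadioAux

/-- `rn(P_{2k}) = 2k(k-1) + 1` for `k ≥ 2`, and this equals the lower
bound `(n-1)(d+ε) - 2L(T) + ε` with `n = 2k`, `d = 2k-1`, `ε = 0`. -/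
theorem radioNumber_path_even (k : ℕ) (hk : 2 ≤ k) :
    radioNumber (SimpleGraph.pathGraph (2 * k)) = 2 * k * (k - 1) + 1 ∧
    (2 * (k : ℤ) * ((k : ℤ) - 1) + 1 =
      (2 * (k : ℤ) - 1) * ((2 * (k : ℤ) - 1) + 0) -
        2 * (totalLevel (SimpleGraph.pathGraph (2 * k)) : ℤ) + 0) := by
  constructor
  · have hmem : (2*k*(k-1)+1) ∈
        {m | ∃ f : Fin (2*k) → ℕ, IsRadioLabeling (pathGraph (2*k)) f ∧ span f = m} :=
      ⟨lab k, lab_radio k hk, lab_span k hk⟩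
    apply le_antisymm
    · exact Nat.sInf_le hmem
    · apply le_csInf ⟨_, hmem⟩
      rintro m ⟨f, hf, rfl⟩
      exact radio_lower k hk f hf
  · rw [totalLevel_path k hk]
    push_cast [show 1 ≤ k by omega]
    ring
end

section
/- If T is a lower bound tree (rn(T) = lb(T)) with unique weight center, n_0 vertices and diameter d_0, then for k ≥ 3, T_{S_k} is also a lower bound tree and rn(T_{S_k}) = k(rn(T) + n_0(d - d_0 - 2) + d_0) + 1, where d = diam(T_{S_k}). -/
open Finset

open RadioNr

/-!
Levels are measured from the weight centre, which is unique in `T` and, for `k ≥ 2`, is the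
centre of the star in `T_{S_k}`. Listing the vertices by increasing label, a radio labeling must
increase by at least `diam + 1 - L(u) - L(v)` between consecutive vertices; summing gives
`lb ≤ rn`, and a labeling of span `lb(T)` attains all these bounds, so `T` has an ordering `z`,
ending at `w₀`, along which these minimal increments already form a radio labeling.

In `T_{S_k}` list the centre first and then `z` in all `k` copies in turn, again with the
minimal increments. Two vertices in different copies are at distance `L(u) + L(v)`, which the
increments always cover. Two vertices of the same copy are `k` positions apart for each step of
`z`, and for `k ≥ 3` each such round makes up for the larger diameter, so the radio condition of
`T` along `z` carries over. Hence `rn(T_{S_k}) = lb(T_{S_k})`; the formula is arithmetic.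
-/

namespace SimpleGraph

variable {V : Type*} {G : SimpleGraph V}

lemma Walk.abs_sub_le_length {η : V → ℤ} (hη : ∀ u v, G.Adj u v → |η u - η v| ≤ 1)
    {a b : V} (p : G.Walk a b) : |η a - η b| ≤ p.length := by
  induction p with
  | nil => simp
  | @cons u v c huv q ih =>
    rw [length_cons, Nat.cast_succ]
    calc |η u - η c| ≤ |η u - η v| + |η v - η c| := abs_sub_le _ _ _
      _ ≤ _ := by linarith [hη u v huv]

lemma Connected.abs_sub_le_dist (hG : G.Connected) {η : V → ℤ}
    (hη : ∀ u v, G.Adj u v → |η u - η v| ≤ 1) (a b : V) : |η a - η b| ≤ G.dist a b := by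
  obtain ⟨p, hp⟩ := (hG a b).exists_walk_length_eq_dist
  exact hp ▸ p.abs_sub_le_length hη

lemma Connected.abs_dist_sub_dist_le (hG : G.Connected) (a b c : V) :
    |(G.dist a c : ℤ) - G.dist b c| ≤ G.dist a b := by
  have h₁ := hG.dist_triangle (u := a) (v := b) (w := c)
  have h₂ := hG.dist_triangle (u := b) (v := a) (w := c)
  rw [dist_comm (u := b) (v := a)] at h₂
  rw [abs_le]
  constructor <;> omega

lemma Connected.dist_le_diam [Finite V] (hG : G.Connected) (u v : V) : G.dist u v ≤ G.diam :=
  have := hG.nonempty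
  _root_.SimpleGraph.dist_le_diam (G.connected_iff_ediam_ne_top.mp hG)

lemma Connected.one_le_dist_add_dist (hG : G.Connected) {u v : V} (c : V) (huv : u ≠ v) :
    1 ≤ G.dist u c + G.dist v c := by
  have h₁ := hG.pos_dist_of_ne huv
  have h₂ := hG.dist_triangle (u := u) (v := c) (w := v)
  rw [dist_comm (u := c)] at h₂
  omega

end SimpleGraph

namespace RadioNr

section RadioLabeling

variable {V : Type*} [Fintype V] {G : SimpleGraph V}

variable (G) in
lemma exists_isRadioLabeling : ∃ f, IsRadioLabeling G f := by
  refine ⟨fun v => Fintype.equivFin V v * (G.diam + 1), fun u v huv => ?_⟩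
  have hne : (Fintype.equivFin V u : ℤ) ≠ Fintype.equivFin V v := by
    exact_mod_cast Fin.val_injective.ne ((Fintype.equivFin V).injective.ne huv)
  have h₁ : (1 : ℤ) ≤ |(Fintype.equivFin V u : ℤ) - Fintype.equivFin V v| :=
    Int.one_le_abs (sub_ne_zero.mpr hne)
  push_cast
  rw [← sub_mul, abs_mul, abs_of_nonneg (by positivity : (0 : ℤ) ≤ G.diam + 1)]
  nlinarith

variable (G) in
lemma exists_span_eq_radioNumber : ∃ f, IsRadioLabeling G f ∧ span f = radioNumber G :=
  Nat.sInf_mem (s := {k | ∃ f, IsRadioLabeling G f ∧ span f = k})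
    (let ⟨f, hf⟩ := exists_isRadioLabeling G; ⟨span f, f, hf, rfl⟩)

lemma radioNumber_le_span {f : V → ℕ} (hf : IsRadioLabeling G f) : radioNumber G ≤ span f :=
  Nat.sInf_le ⟨f, hf, rfl⟩

lemma IsRadioLabeling.injective (hG : G.Connected) {f : V → ℕ} (hf : IsRadioLabeling G f) :
    Function.Injective f := by
  intro u v h
  by_contra huv
  have h₁ := hf u v huv
  have h₂ := hG.dist_le_diam u v
  rw [h, sub_self, abs_zero] at h₁
  omega

lemma level_eq_dist {c : V} (hc : IsWeightCenter G c) (huniq : ∀ v, IsWeightCenter G v → v = c)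
    (v : V) : level G v = G.dist v c := by
  obtain ⟨x, hx, hdx⟩ : level G v ∈ {n | ∃ x, IsWeightCenter G x ∧ G.dist v x = n} :=
    Nat.sInf_mem ⟨_, c, hc, rfl⟩
  rw [← hdx, huniq x hx]

lemma exists_bijOn_strictMonoOn [Nonempty V] {f : V → ℕ} (hf : Function.Injective f) :
    ∃ x : ℕ → V, Set.BijOn x (Set.Iio (Fintype.card V)) Set.univ ∧
      StrictMonoOn (f ∘ x) (Set.Iio (Fintype.card V)) := by
  classical
  have hfin : (Set.ofPred (· ∈ Set.range f)).Finite := Set.finite_range f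
  have hcard : hfin.toFinset.card = Fintype.card V := by
    rw [show hfin.toFinset = univ.image f by ext; simp, card_image_of_injective _ hf, card_univ]
  have hfx : ∀ t < Fintype.card V, f (Function.invFun f (Nat.nth (· ∈ Set.range f) t)) =
      Nat.nth (· ∈ Set.range f) t := fun t ht =>
    Function.invFun_eq (Nat.nth_mem_of_lt_card hfin (hcard ▸ ht))
  have hmono : StrictMonoOn (f ∘ Function.invFun f ∘ Nat.nth (· ∈ Set.range f))
      (Set.Iio (Fintype.card V)) := by
    intro s hs t ht hst
    simp only [Function.comp_apply, hfx s hs, hfx t ht]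
    exact Nat.nth_strictMonoOn hfin (hcard ▸ hs) (hcard ▸ ht) hst
  refine ⟨Function.invFun f ∘ Nat.nth (· ∈ Set.range f),
    ⟨Set.mapsTo_univ _ _, fun s hs t ht h => hmono.injOn hs ht (congrArg f h), ?_⟩, hmono⟩
  intro v _
  obtain ⟨t, ht, hnth⟩ := Nat.exists_lt_card_finite_nth_eq hfin (Set.mem_range_self (f := f) v)
  exact ⟨t, hcard ▸ ht, hf (by rw [Function.comp_apply, hfx t (hcard ▸ ht), hnth])⟩

end RadioLabeling

section TightGap

variable {V : Type*} {G : SimpleGraph V} {c : V} {x : ℕ → V}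

variable (G) in
/-- The smallest label increment that Liu's lower bound allows between the `t`-th and the
`(t + 1)`-st vertex of the ordering `x`, levels being measured from `c`. -/
noncomputable def tightGap (c : V) (x : ℕ → V) (t : ℕ) : ℤ :=
  G.diam + 1 - G.dist (x t) c - G.dist (x (t + 1)) c

lemma sum_tightGap_Ico_ge (hc : ∀ v, 2 * G.dist v c ≤ G.diam) (x : ℕ → V) {s t : ℕ}
    (hst : s < t) :
    ((t : ℤ) - s - 1) + G.diam + 1 - G.dist (x s) c - G.dist (x t) c ≤
      ∑ i ∈ Ico s t, tightGap G c x i := by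
  induction t, hst using Nat.le_induction with
  | base => simp [tightGap]
  | succ t hst ih =>
    rw [sum_Ico_succ_top (by omega)]
    have := hc (x t)
    simp only [tightGap] at ih ⊢
    push_cast at ih ⊢
    omega

lemma le_dist_add_sum_tightGap (hc : ∀ v, 2 * G.dist v c ≤ G.diam) {s t : ℕ} (hst : s < t)
    (hd : G.dist (x s) (x t) = G.dist (x s) c + G.dist (x t) c) :
    (G.diam : ℤ) + 1 ≤ G.dist (x s) (x t) + ∑ i ∈ Ico s t, tightGap G c x i := by
  have := sum_tightGap_Ico_ge hc x hst
  rw [hd]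
  push_cast
  omega

end TightGap

section RadioOrdering

variable {V : Type*} [Fintype V] {G : SimpleGraph V} {c : V} {x : ℕ → V}

variable (G) in
/-- The ordering `x` is one along which the labels `t ↦ ∑ i < t, tightGap G c x i` form a radio
labeling. -/
def IsRadioOrdering (c : V) (x : ℕ → V) : Prop :=
  ∀ s t, s < t → t < Fintype.card V →
    (G.diam : ℤ) + 1 ≤ G.dist (x s) (x t) + ∑ i ∈ Ico s t, tightGap G c x i

variable (G) in
/-- `lb(G)` when the levels are measured from the single vertex `c`, so that `ε = 1`. -/
noncomputable def lowerBound (c : V) : ℤ :=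
  ((Fintype.card V : ℤ) - 1) * (G.diam + 1) - 2 * ∑ v, (G.dist v c : ℤ) + 1

lemma totalLevel_eq_sum_dist (hc : IsWeightCenter G c)
    (huniq : ∀ v, IsWeightCenter G v → v = c) : totalLevel G = ∑ v, G.dist v c :=
  Finset.sum_congr rfl fun v _ => level_eq_dist hc huniq v

lemma sum_range_comp_of_bijOn (hx : Set.BijOn x (Set.Iio (Fintype.card V)) Set.univ)
    (g : V → ℤ) : ∑ t ∈ range (Fintype.card V), g (x t) = ∑ v, g v :=
  Finset.sum_nbij x (fun _ _ => mem_univ _) (by rw [coe_range]; exact hx.injOn)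
    (by rw [coe_range, coe_univ]; exact hx.surjOn) fun _ _ => rfl

lemma sum_tightGap_eq (hx : Set.BijOn x (Set.Iio (Fintype.card V)) Set.univ)
    (hN : 0 < Fintype.card V) :
    ∑ t ∈ range (Fintype.card V - 1), tightGap G c x t =
      lowerBound G c - 1 + G.dist (x 0) c + G.dist (x (Fintype.card V - 1)) c := by
  have hsum := sum_range_comp_of_bijOn hx fun v => (G.dist v c : ℤ)
  obtain ⟨n, hn⟩ : ∃ n, Fintype.card V = n + 1 := ⟨_, (Nat.succ_pred_eq_of_pos hN).symm⟩
  have hlast := hsum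
  rw [hn, sum_range_succ] at hlast
  rw [hn, sum_range_succ'] at hsum
  simp only [tightGap, lowerBound, hn, Nat.add_sub_cancel, sum_sub_distrib, sum_const,
    card_range, nsmul_eq_mul]
  push_cast
  linarith

lemma tightGap_le_of_isRadioLabeling (hG : G.Connected) {f : V → ℕ} (hf : IsRadioLabeling G f)
    {t : ℕ} (hne : x t ≠ x (t + 1)) (hle : f (x t) ≤ f (x (t + 1))) :
    tightGap G c x t ≤ f (x (t + 1)) - f (x t) := by
  have hrad := hf _ _ hne
  rw [abs_sub_comm, abs_of_nonneg (by omega)] at hrad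
  have htri := hG.dist_triangle (u := x t) (v := c) (w := x (t + 1))
  rw [SimpleGraph.dist_comm (u := c)] at htri
  simp only [tightGap]
  omega

lemma tightGap_le_of_strictMonoOn (hG : G.Connected) {f : V → ℕ} (hf : IsRadioLabeling G f)
    (hmono : StrictMonoOn (f ∘ x) (Set.Iio (Fintype.card V))) {t : ℕ}
    (ht : t + 1 < Fintype.card V) : tightGap G c x t ≤ f (x (t + 1)) - f (x t) := by
  have hlt : f (x t) < f (x (t + 1)) :=
    hmono (show t < _ by omega) (show t + 1 < _ from ht) (Nat.lt_succ_self t)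
  exact tightGap_le_of_isRadioLabeling hG hf (fun h => hlt.ne (by rw [h])) hlt.le

lemma sum_tightGap_le_of_strictMonoOn (hG : G.Connected) {f : V → ℕ} (hf : IsRadioLabeling G f)
    (hmono : StrictMonoOn (f ∘ x) (Set.Iio (Fintype.card V))) :
    ∑ t ∈ range (Fintype.card V - 1), tightGap G c x t ≤
      f (x (Fintype.card V - 1)) - f (x 0) := by
  rw [← sum_range_sub fun t => (f (x t) : ℤ)]
  exact sum_le_sum fun t ht => tightGap_le_of_strictMonoOn hG hf hmono (by simp at ht; omega)

lemma lowerBound_le_span (hG : G.Connected) (hN : 2 ≤ Fintype.card V) {f : V → ℕ}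
    (hf : IsRadioLabeling G f) (c : V) : lowerBound G c ≤ span f := by
  have : Nonempty V := hG.nonempty
  obtain ⟨x, hx, hmono⟩ := exists_bijOn_strictMonoOn (hf.injective hG)
  have hsum := sum_tightGap_le_of_strictMonoOn (c := c) hG hf hmono
  rw [sum_tightGap_eq hx (by omega)] at hsum
  have hends := hG.one_le_dist_add_dist c
    (hx.injOn.ne (show 0 < Fintype.card V by omega) (show Fintype.card V - 1 < _ by omega)
      (by omega))
  have hspan : f (x (Fintype.card V - 1)) ≤ span f := le_sup (mem_univ _)
  omega

lemma lowerBound_le_radioNumber (hG : G.Connected) (hN : 2 ≤ Fintype.card V) (c : V) :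
    lowerBound G c ≤ radioNumber G :=
  let ⟨_, hf, hspan⟩ := exists_span_eq_radioNumber G
  hspan ▸ lowerBound_le_span hG hN hf c

/-- A radio labeling attaining `lb(G)` increases by exactly `tightGap` along its ordering. -/
lemma isRadioOrdering_of_span_eq (hG : G.Connected) (hN : 2 ≤ Fintype.card V) {f : V → ℕ}
    (hf : IsRadioLabeling G f) (hspan : (span f : ℤ) = lowerBound G c)
    (hx : Set.BijOn x (Set.Iio (Fintype.card V)) Set.univ)
    (hmono : StrictMonoOn (f ∘ x) (Set.Iio (Fintype.card V))) :
    IsRadioOrdering G c x ∧ G.dist (x 0) c + G.dist (x (Fintype.card V - 1)) c = 1 := by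
  set N := Fintype.card V
  set F : ℕ → ℤ := fun t => f (x t)
  have hexcess : ∀ t ∈ range (N - 1), 0 ≤ F (t + 1) - F t - tightGap G c x t := fun t ht =>
    sub_nonneg.mpr (tightGap_le_of_strictMonoOn hG hf hmono (by simp at ht; omega))
  have hsum : ∑ t ∈ range (N - 1), (F (t + 1) - F t - tightGap G c x t) =
      F (N - 1) - F 0 - (lowerBound G c - 1 + G.dist (x 0) c + G.dist (x (N - 1)) c) := by
    rw [sum_sub_distrib, sum_range_sub, sum_tightGap_eq hx (by omega)]
  have hends := hG.one_le_dist_add_dist c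
    (hx.injOn.ne (show 0 < N by omega) (show N - 1 < N by omega) (by omega))
  have hlast : F (N - 1) ≤ span f := Nat.cast_le.mpr (le_sup (mem_univ _))
  have hfirst : 0 ≤ F 0 := Nat.cast_nonneg _
  have hzero : ∑ t ∈ range (N - 1), (F (t + 1) - F t - tightGap G c x t) = 0 :=
    le_antisymm (by omega) (sum_nonneg hexcess)
  have htight : ∀ i ∈ range (N - 1), tightGap G c x i = F (i + 1) - F i := fun i hi => by
    linarith [(sum_eq_zero_iff_of_nonneg hexcess).mp hzero i hi]
  refine ⟨fun s t hst ht => ?_, by omega⟩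
  have hlt : F s < F t := Nat.cast_lt.mpr (hmono (show s < N by omega) ht hst)
  have hrad := hf (x s) (x t) (hx.injOn.ne (show s < N by omega) ht hst.ne)
  rw [abs_sub_comm, abs_of_pos (sub_pos.mpr hlt)] at hrad
  rwa [sum_congr rfl fun i hi => htight i (by simp at hi ⊢; omega), sum_Ico_sub F hst.le]

lemma bijOn_reverse (hx : Set.BijOn x (Set.Iio (Fintype.card V)) Set.univ) :
    Set.BijOn (fun t => x (Fintype.card V - 1 - t)) (Set.Iio (Fintype.card V)) Set.univ := by
  refine hx.comp (f := fun t => Fintype.card V - 1 - t) ⟨fun t ht => ?_, fun s hs t ht h => ?_,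
    fun t ht => ⟨Fintype.card V - 1 - t, ?_, ?_⟩⟩ <;> simp_all <;> omega

lemma IsRadioOrdering.reverse (h : IsRadioOrdering G c x) :
    IsRadioOrdering G c (fun t => x (Fintype.card V - 1 - t)) := by
  intro s t hst ht
  set N := Fintype.card V
  have hreflect := sum_Ico_reflect (tightGap G c x) s (show t ≤ N - 2 + 1 by omega)
  rw [show N - 2 + 1 = N - 1 by omega] at hreflect
  have hsum : ∑ i ∈ Ico s t, tightGap G c (fun t => x (N - 1 - t)) i =
      ∑ i ∈ Ico (N - 1 - t) (N - 1 - s), tightGap G c x i := by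
    rw [← hreflect]
    refine sum_congr rfl fun i hi => ?_
    simp only [mem_Ico] at hi
    simp only [tightGap, show N - 1 - (i + 1) = N - 2 - i by omega,
      show N - 2 - i + 1 = N - 1 - i by omega]
    ring
  simp only [hsum, SimpleGraph.dist_comm (u := x (N - 1 - s))]
  exact h (N - 1 - t) (N - 1 - s) (by omega) (by omega)

lemma exists_isRadioOrdering_of_radioNumber_eq (hG : G.Connected) (hN : 2 ≤ Fintype.card V)
    (h : (radioNumber G : ℤ) = lowerBound G c) :
    ∃ x : ℕ → V, Set.BijOn x (Set.Iio (Fintype.card V)) Set.univ ∧ IsRadioOrdering G c x ∧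
      x (Fintype.card V - 1) = c := by
  have : Nonempty V := hG.nonempty
  obtain ⟨f, hf, hspan⟩ := exists_span_eq_radioNumber G
  obtain ⟨x, hx, hmono⟩ := exists_bijOn_strictMonoOn (hf.injective hG)
  obtain ⟨hrad, hends⟩ := isRadioOrdering_of_span_eq hG hN hf (hspan ▸ h) hx hmono
  by_cases hlast : G.dist (x (Fintype.card V - 1)) c = 0
  · exact ⟨x, hx, hrad, hG.dist_eq_zero_iff.mp hlast⟩
  · refine ⟨_, bijOn_reverse hx, hrad.reverse, ?_⟩
    simp only [Nat.sub_self]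
    exact hG.dist_eq_zero_iff.mp (by omega)

lemma radioNumber_le_of_isRadioOrdering (hc : ∀ v, 2 * G.dist v c ≤ G.diam)
    (hx : Set.BijOn x (Set.Iio (Fintype.card V)) Set.univ) (h : IsRadioOrdering G c x) :
    (radioNumber G : ℤ) ≤ ∑ t ∈ range (Fintype.card V - 1), tightGap G c x t := by
  set g : ℕ → ℤ := fun t => ∑ i ∈ range t, tightGap G c x i
  have hdiff : ∀ s t, s ≤ t → g t - g s = ∑ i ∈ Ico s t, tightGap G c x i := fun s t hst =>
    (sum_Ico_eq_sub _ hst).symm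
  have hmono : Monotone g := fun s t hst => by
    rcases hst.eq_or_lt with rfl | hlt
    · rfl
    have := sum_tightGap_Ico_ge hc x hlt
    have := hc (x s)
    have := hc (x t)
    have := hdiff s t hst
    omega
  choose pos hposN hxpos using fun v => hx.surjOn (Set.mem_univ v)
  have hf : ∀ v, ((g (pos v)).toNat : ℤ) = g (pos v) := fun v =>
    Int.toNat_of_nonneg (hmono (Nat.zero_le _))
  have hrad : IsRadioLabeling G fun v => (g (pos v)).toNat := by
    have key : ∀ u v, pos u < pos v →
        (G.diam : ℤ) + 1 ≤ G.dist u v + |((g (pos u)).toNat : ℤ) - (g (pos v)).toNat| := by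
      intro u v huv
      rw [hf, hf, abs_sub_comm, abs_of_nonneg (sub_nonneg.mpr (hmono huv.le)), hdiff _ _ huv.le]
      simpa only [hxpos] using h _ _ huv (hposN v)
    intro u v huv
    rcases lt_trichotomy (pos u) (pos v) with hlt | heq | hgt
    · exact key u v hlt
    · exact absurd (by rw [← hxpos u, heq, hxpos]) huv
    · rw [SimpleGraph.dist_comm, abs_sub_comm]
      exact key v u hgt
  have hspan : span (fun v => (g (pos v)).toNat) ≤ (g (Fintype.card V - 1)).toNat :=
    Finset.sup_le fun v _ => Int.toNat_le_toNat (hmono (Nat.le_sub_one_of_lt (hposN v)))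
  calc (radioNumber G : ℤ) ≤ (g (Fintype.card V - 1)).toNat := by
        exact_mod_cast (radioNumber_le_span hrad).trans hspan
    _ = g (Fintype.card V - 1) := Int.toNat_of_nonneg (hmono (Nat.zero_le _))

end RadioOrdering

section StarGluing

variable {V V' : Type*} {k : ℕ}

/-- `T'` is `T_{S_k}`: the copies `φ i` of `T`, for `i : Fin k`, together with the centre `w`
of the star, which is joined to the copy `φ i w₀` of the weight centre in each of them. -/
structure IsStarGluing (T : SimpleGraph V) (w₀ : V) (T' : SimpleGraph V')
    (φ : Fin k → V → V') (w : V') : Prop where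
  injective : ∀ i, Function.Injective (φ i)
  disjoint : ∀ i j, i ≠ j → ∀ x y, φ i x ≠ φ j y
  ne_center : ∀ i x, φ i x ≠ w
  cover : ∀ v, v = w ∨ ∃ i x, φ i x = v
  adj_iff : ∀ i x y, T'.Adj (φ i x) (φ i y) ↔ T.Adj x y
  adj_center_iff : ∀ i x, T'.Adj w (φ i x) ↔ x = w₀
  not_adj : ∀ i j, i ≠ j → ∀ x y, ¬ T'.Adj (φ i x) (φ j y)

/-- Read on `T'` through `IsStarGluing.equiv`, the differences of this potential bound from below
the distances that pass through the centre of the star. -/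
noncomputable def signedHeight (T : SimpleGraph V) (w₀ : V) (i : Fin k) :
    (Fin k × V) ⊕ Unit → ℤ :=
  Sum.elim (fun p => (if p.1 = i then 1 else -1) * (T.dist p.2 w₀ + 1)) fun _ => 0

section Ordering

variable [NeZero k]

/-- The centre `w` first, then `z` run through all copies in turn:
`φ 0 (z 0), …, φ (k - 1) (z 0), φ 0 (z 1), …`. -/
def starOrdering (φ : Fin k → V → V') (w : V') (z : ℕ → V) : ℕ → V'
  | 0 => w
  | t + 1 => φ (Fin.ofNat k t) (z (t / k))

variable {φ : Fin k → V → V'} {w : V'} {z : ℕ → V}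

lemma starOrdering_succ (i : Fin k) (p : ℕ) :
    starOrdering φ w z (k * p + i + 1) = φ i (z p) := by
  have hk := NeZero.pos k
  simp only [starOrdering]
  congr
  · ext
    simp [Nat.mod_eq_of_lt i.2]
  · rw [Nat.mul_add_div hk, Nat.div_eq_of_lt i.2, add_zero]

lemma exists_eq_mul_add (t : ℕ) : ∃ (i : Fin k) (p : ℕ), t = k * p + i :=
  ⟨Fin.ofNat k t, t / k, by simp [Nat.div_add_mod]⟩

end Ordering

namespace IsStarGluing

variable {T : SimpleGraph V} {w₀ : V} {T' : SimpleGraph V'} {φ : Fin k → V → V'} {w : V'}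

lemma bijective (hg : IsStarGluing T w₀ T' φ w) :
    Function.Bijective (Sum.elim (fun p : Fin k × V => φ p.1 p.2) fun _ : Unit => w) := by
  refine ⟨?_, fun v => ?_⟩
  · rintro (⟨i, x⟩ | ⟨⟩) (⟨j, y⟩ | ⟨⟩) h
    · simp only [Sum.elim_inl] at h
      obtain rfl : i = j := by_contra fun hij => hg.disjoint i j hij x y h
      rw [hg.injective i h]
    · exact absurd h (hg.ne_center i x)
    · exact absurd h.symm (hg.ne_center j y)
    · rfl
  · rcases hg.cover v with rfl | ⟨i, x, rfl⟩
    · exact ⟨.inr (), rfl⟩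
    · exact ⟨.inl (i, x), rfl⟩

noncomputable def equiv (hg : IsStarGluing T w₀ T' φ w) : (Fin k × V) ⊕ Unit ≃ V' :=
  Equiv.ofBijective _ hg.bijective

lemma equiv_symm_apply (hg : IsStarGluing T w₀ T' φ w) (i : Fin k) (x : V) :
    hg.equiv.symm (φ i x) = .inl (i, x) :=
  hg.equiv.symm_apply_eq.mpr rfl

lemma equiv_symm_center (hg : IsStarGluing T w₀ T' φ w) : hg.equiv.symm w = .inr () :=
  hg.equiv.symm_apply_eq.mpr rfl

lemma abs_sub_le_dist (hg : IsStarGluing T w₀ T' φ w) (hT' : T'.Connected)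
    (F : (Fin k × V) ⊕ Unit → ℤ)
    (hcopy : ∀ i a b, T.Adj a b → |F (.inl (i, a)) - F (.inl (i, b))| ≤ 1)
    (hcenter : ∀ i, |F (.inr ()) - F (.inl (i, w₀))| ≤ 1) (u v : V') :
    |F (hg.equiv.symm u) - F (hg.equiv.symm v)| ≤ T'.dist u v := by
  refine hT'.abs_sub_le_dist (η := F ∘ hg.equiv.symm) (fun u v huv => ?_) u v
  rcases hg.cover u with rfl | ⟨i, a, rfl⟩ <;> rcases hg.cover v with rfl | ⟨j, b, rfl⟩
  · exact (T'.irrefl huv).elim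
  · rw [(hg.adj_center_iff j b).mp huv]
    simpa only [Function.comp_apply, equiv_symm_center, equiv_symm_apply] using hcenter j
  · rw [(hg.adj_center_iff i a).mp huv.symm, abs_sub_comm]
    simpa only [Function.comp_apply, equiv_symm_center, equiv_symm_apply] using hcenter i
  · obtain rfl : i = j := by_contra fun hij => hg.not_adj i j hij a b huv
    simpa only [Function.comp_apply, equiv_symm_apply] using
      hcopy i a b ((hg.adj_iff i a b).mp huv)

lemma dist_apply_apply (hg : IsStarGluing T w₀ T' φ w) (hT : T.Connected) (hT' : T'.Connected)
    (i : Fin k) (x y : V) : T'.dist (φ i x) (φ i y) = T.dist x y := by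
  refine le_antisymm ?_ ?_
  · obtain ⟨p, hp⟩ := (hT x y).exists_walk_length_eq_dist
    have := SimpleGraph.dist_le (p.map ⟨φ i, (hg.adj_iff i _ _).mpr⟩)
    rwa [SimpleGraph.Walk.length_map, hp] at this
  · -- the distance to `y` after collapsing every other copy onto `w₀`
    have := hg.abs_sub_le_dist hT'
      (Sum.elim (fun p => if p.1 = i then T.dist p.2 y else T.dist w₀ y) fun _ => T.dist w₀ y)
      (fun j a b hab => ?_) (fun j => ?_) (φ i x) (φ i y)
    · simpa [equiv_symm_apply] using this
    · simp only [Sum.elim_inl]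
      split_ifs
      · simpa [SimpleGraph.dist_eq_one_iff_adj.mpr hab] using hT.abs_dist_sub_dist_le a b y
      · simp
    · simp only [Sum.elim_inl, Sum.elim_inr]
      split_ifs <;> simp

lemma abs_signedHeight_sub_le_dist (hg : IsStarGluing T w₀ T' φ w) (hT : T.Connected)
    (hT' : T'.Connected) (i : Fin k) (u v : V') :
    |signedHeight T w₀ i (hg.equiv.symm u) - signedHeight T w₀ i (hg.equiv.symm v)| ≤
      T'.dist u v := by
  refine hg.abs_sub_le_dist hT' _ (fun j a b hab => ?_) (fun j => ?_) u v
  · simp only [signedHeight, Sum.elim_inl, ← mul_sub, abs_mul]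
    have := hT.abs_dist_sub_dist_le a b w₀
    rw [SimpleGraph.dist_eq_one_iff_adj.mpr hab] at this
    split_ifs <;> simpa using this
  · simp only [signedHeight, Sum.elim_inl, Sum.elim_inr, SimpleGraph.dist_self]
    split_ifs <;> simp

lemma dist_center_apply (hg : IsStarGluing T w₀ T' φ w) (hT : T.Connected)
    (hT' : T'.Connected) (i : Fin k) (x : V) : T'.dist w (φ i x) = T.dist x w₀ + 1 := by
  refine le_antisymm ?_ ?_
  · calc T'.dist w (φ i x) ≤ T'.dist w (φ i w₀) + T'.dist (φ i w₀) (φ i x) := hT'.dist_triangle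
      _ = T.dist x w₀ + 1 := by
          rw [SimpleGraph.dist_eq_one_iff_adj.mpr ((hg.adj_center_iff i w₀).mpr rfl),
            hg.dist_apply_apply hT hT', SimpleGraph.dist_comm, add_comm]
  · have := hg.abs_signedHeight_sub_le_dist hT hT' i w (φ i x)
    simp only [signedHeight, equiv_symm_center, equiv_symm_apply, Sum.elim_inl,
      Sum.elim_inr, if_pos, one_mul, zero_sub, abs_neg] at this
    rw [abs_of_nonneg (by positivity)] at this
    exact_mod_cast this

lemma dist_apply_center (hg : IsStarGluing T w₀ T' φ w) (hT : T.Connected)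
    (hT' : T'.Connected) (i : Fin k) (x : V) : T'.dist (φ i x) w = T.dist x w₀ + 1 := by
  rw [SimpleGraph.dist_comm, hg.dist_center_apply hT hT']

lemma dist_apply_apply_of_ne (hg : IsStarGluing T w₀ T' φ w) (hT : T.Connected)
    (hT' : T'.Connected) {i j : Fin k} (hij : i ≠ j) (x y : V) :
    T'.dist (φ i x) (φ j y) = T'.dist (φ i x) w + T'.dist (φ j y) w := by
  refine le_antisymm ?_ ?_
  · rw [SimpleGraph.dist_comm (u := φ j y)]
    exact hT'.dist_triangle
  · have := hg.abs_signedHeight_sub_le_dist hT hT' i (φ i x) (φ j y)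
    simp only [signedHeight, equiv_symm_apply, Sum.elim_inl, if_pos, if_neg hij.symm,
      one_mul, neg_one_mul, sub_neg_eq_add] at this
    rw [abs_of_nonneg (by positivity)] at this
    rw [hg.dist_apply_center hT hT', hg.dist_apply_center hT hT']
    omega

lemma dist_center_le (hg : IsStarGluing T w₀ T' φ w) (hT : T.Connected) (hT' : T'.Connected)
    {e : ℕ} (he : ∀ x, T.dist x w₀ ≤ e) (v : V') : T'.dist v w ≤ e + 1 := by
  rcases hg.cover v with rfl | ⟨i, x, rfl⟩
  · simp
  · simpa [hg.dist_apply_center hT hT'] using he x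

lemma diam_eq [Finite V'] (hg : IsStarGluing T w₀ T' φ w) (hT : T.Connected)
    (hT' : T'.Connected) (hk : 2 ≤ k) {x₀ : V} (hx₀ : ∀ x, T.dist x w₀ ≤ T.dist x₀ w₀) :
    T'.diam = 2 * T.dist x₀ w₀ + 2 := by
  have : Nonempty V' := ⟨w⟩
  refine le_antisymm ?_ ?_
  · obtain ⟨u, v, huv⟩ := T'.exists_dist_eq_diam
    have htri := hT'.dist_triangle (u := u) (v := w) (w := v)
    rw [SimpleGraph.dist_comm (u := w)] at htri
    have := hg.dist_center_le hT hT' hx₀ u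
    have := hg.dist_center_le hT hT' hx₀ v
    omega
  · have h01 : (⟨0, by omega⟩ : Fin k) ≠ ⟨1, by omega⟩ := by simp
    have := hT'.dist_le_diam (φ ⟨0, by omega⟩ x₀) (φ ⟨1, by omega⟩ x₀)
    rw [hg.dist_apply_apply_of_ne hT hT' h01, hg.dist_apply_center hT hT',
      hg.dist_apply_center hT hT'] at this
    omega

section Ordering

variable [NeZero k] {z : ℕ → V}

/-- A round through all `k` copies gains `k - 3 + diam T' - diam T` over the corresponding step of
`z` in `T`; this is where `k ≥ 3` is needed. -/
lemma sum_tightGap_starOrdering_ge (hg : IsStarGluing T w₀ T' φ w) (hT : T.Connected)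
    (hT' : T'.Connected) (hk : 3 ≤ k) (hc : ∀ v, 2 * T'.dist v w ≤ T'.diam)
    (hdiam : T.diam ≤ T'.diam) (i : Fin k) {p q : ℕ} (hpq : p < q) :
    ∑ m ∈ Ico p q, tightGap T w₀ z m + ((T'.diam : ℤ) - T.diam) ≤
      ∑ t ∈ Ico (k * p + i + 1) (k * q + i + 1), tightGap T' w (starOrdering φ w z) t := by
  have hstep : ∀ m, tightGap T w₀ z m + ((T'.diam : ℤ) - T.diam) ≤
      ∑ t ∈ Ico (k * m + i + 1) (k * (m + 1) + i + 1), tightGap T' w (starOrdering φ w z) t := by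
    intro m
    have := sum_tightGap_Ico_ge hc (starOrdering φ w z)
      (show k * m + i + 1 < k * (m + 1) + i + 1 by rw [Nat.mul_succ]; omega)
    rw [starOrdering_succ, starOrdering_succ, hg.dist_apply_center hT hT',
      hg.dist_apply_center hT hT'] at this
    rw [Nat.mul_succ] at this ⊢
    simp only [tightGap] at this ⊢
    push_cast at this ⊢
    linarith
  induction q, hpq using Nat.le_induction with
  | base => simpa using hstep p
  | succ q hpq ih =>
    rw [sum_Ico_succ_top (Nat.le_of_succ_le hpq),
      ← sum_Ico_consecutive (tightGap T' w (starOrdering φ w z)) (n := k * q + i + 1)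
        (by nlinarith) (by rw [Nat.mul_succ]; omega)]
    linarith [hstep q]

end Ordering

variable [Fintype V] [Fintype V']

lemma card_eq (hg : IsStarGluing T w₀ T' φ w) :
    Fintype.card V' = k * Fintype.card V + 1 := by
  simp [← Fintype.card_congr hg.equiv]

lemma sum_eq {M : Type*} [AddCommMonoid M]
    (hg : IsStarGluing T w₀ T' φ w) (F : V' → M) :
    ∑ v, F v = F w + ∑ i, ∑ x, F (φ i x) := by
  rw [← hg.equiv.sum_comp, Fintype.sum_sum_type, Fintype.sum_prod_type, add_comm]
  simp [equiv]

lemma sum_dist_center (hg : IsStarGluing T w₀ T' φ w) (hT : T.Connected) (hT' : T'.Connected) :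
    ∑ v, T'.dist v w = k * (∑ x, T.dist x w₀ + Fintype.card V) := by
  simp [hg.sum_eq, hg.dist_apply_center hT hT', sum_add_distrib]

lemma wt_center_lt (hg : IsStarGluing T w₀ T' φ w) (hT : T.Connected) (hT' : T'.Connected)
    (hw₀ : IsWeightCenter T w₀) (hk : 2 ≤ k) (i : Fin k) (z : V) :
    wt T' w < wt T' (φ i z) := by
  set L := ∑ x, T.dist x w₀
  set n := Fintype.card V
  have hself : L ≤ ∑ x, T'.dist (φ i x) (φ i z) := by
    simp only [hg.dist_apply_apply hT hT']
    exact hw₀ z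
  have hother : ∀ j ∈ univ.erase i, L + 2 * n ≤ ∑ x, T'.dist (φ j x) (φ i z) := fun j hj => by
    rw [show L + 2 * n = ∑ x, (T.dist x w₀ + 2) by simp [L, n, sum_add_distrib, mul_comm]]
    refine sum_le_sum fun x _ => ?_
    rw [hg.dist_apply_apply_of_ne hT hT' (ne_of_mem_erase hj), hg.dist_apply_center hT hT',
      hg.dist_apply_center hT hT']
    omega
  have hothers := card_nsmul_le_sum _ _ _ hother
  rw [card_erase_of_mem (mem_univ i), card_univ, Fintype.card_fin, smul_eq_mul] at hothers
  calc wt T' w = k * (L + n) := hg.sum_dist_center hT hT'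
    _ < T'.dist w (φ i z) + (L + (k - 1) * (L + 2 * n)) := by
        rw [hg.dist_center_apply hT hT']
        obtain ⟨m, rfl⟩ := Nat.exists_eq_add_of_le' hk
        rw [show m + 2 - 1 = m + 1 from rfl]
        nlinarith
    _ ≤ wt T' (φ i z) := by
        rw [wt, hg.sum_eq, ← add_sum_erase _ _ (mem_univ i)]
        gcongr

lemma isWeightCenter_center (hg : IsStarGluing T w₀ T' φ w) (hT : T.Connected)
    (hT' : T'.Connected) (hw₀ : IsWeightCenter T w₀) (hk : 2 ≤ k) : IsWeightCenter T' w :=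
  fun v => by
    rcases hg.cover v with rfl | ⟨i, z, rfl⟩
    · exact le_rfl
    · exact (hg.wt_center_lt hT hT' hw₀ hk i z).le

lemma eq_center_of_isWeightCenter (hg : IsStarGluing T w₀ T' φ w) (hT : T.Connected)
    (hT' : T'.Connected) (hw₀ : IsWeightCenter T w₀) (hk : 2 ≤ k) (v : V')
    (hv : IsWeightCenter T' v) : v = w := by
  rcases hg.cover v with rfl | ⟨i, z, rfl⟩
  · rfl
  · exact absurd (hv w) (hg.wt_center_lt hT hT' hw₀ hk i z).not_ge

lemma two_mul_dist_center_le_diam (hg : IsStarGluing T w₀ T' φ w) (hT : T.Connected)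
    (hT' : T'.Connected) (hk : 2 ≤ k) (v : V') : 2 * T'.dist v w ≤ T'.diam := by
  have : Nonempty V := hT.nonempty
  obtain ⟨x₀, hx₀⟩ := Finite.exists_max fun x => T.dist x w₀
  have := hg.dist_center_le hT hT' hx₀ v
  rw [hg.diam_eq hT hT' hk hx₀]
  omega

lemma diam_le_diam (hg : IsStarGluing T w₀ T' φ w) (hT : T.Connected) (hT' : T'.Connected)
    (hk : 2 ≤ k) : T.diam ≤ T'.diam := by
  have : Nonempty V := hT.nonempty
  obtain ⟨x₀, hx₀⟩ := Finite.exists_max fun x => T.dist x w₀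
  obtain ⟨u, v, huv⟩ := T.exists_dist_eq_diam
  have htri := hT.dist_triangle (u := u) (v := w₀) (w := v)
  rw [SimpleGraph.dist_comm (u := w₀)] at htri
  have := hx₀ u
  have := hx₀ v
  rw [hg.diam_eq hT hT' hk hx₀]
  omega

section Ordering

variable [NeZero k] {z : ℕ → V}

lemma bijOn_starOrdering (hg : IsStarGluing T w₀ T' φ w)
    (hz : Set.BijOn z (Set.Iio (Fintype.card V)) Set.univ) :
    Set.BijOn (starOrdering φ w z) (Set.Iio (Fintype.card V')) Set.univ := by
  rw [hg.card_eq]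
  refine ⟨Set.mapsTo_univ _ _, ?_, fun v _ => ?_⟩
  · rintro (_ | s) hs (_ | t) ht h
    · rfl
    · exact absurd h.symm (hg.ne_center _ _)
    · exact absurd h (hg.ne_center _ _)
    · obtain ⟨i, p, rfl⟩ := exists_eq_mul_add (k := k) s
      obtain ⟨j, q, rfl⟩ := exists_eq_mul_add (k := k) t
      simp only [Set.mem_Iio] at hs ht
      rw [starOrdering_succ, starOrdering_succ] at h
      obtain rfl : i = j := by_contra fun hij => hg.disjoint i j hij _ _ h
      obtain rfl : p = q := hz.injOn (Nat.lt_of_mul_lt_mul_left (a := k) (by omega))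
        (Nat.lt_of_mul_lt_mul_left (a := k) (by omega)) (hg.injective i h)
      rfl
  · rcases hg.cover v with rfl | ⟨i, y, rfl⟩
    · exact ⟨0, by simp, rfl⟩
    · obtain ⟨p, hp, rfl⟩ := hz.surjOn (Set.mem_univ y)
      simp only [Set.mem_Iio] at hp ⊢
      have := Nat.mul_le_mul_left k hp
      rw [Nat.mul_succ] at this
      have := i.2
      exact ⟨k * p + i + 1, Set.mem_Iio.mpr (by omega), starOrdering_succ i p⟩

lemma isRadioOrdering_starOrdering (hg : IsStarGluing T w₀ T' φ w) (hT : T.Connected)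
    (hT' : T'.Connected) (hk : 3 ≤ k) (hz : IsRadioOrdering T w₀ z) :
    IsRadioOrdering T' w (starOrdering φ w z) := by
  have hc := hg.two_mul_dist_center_le_diam hT hT' (by omega)
  intro s t hst ht
  rw [hg.card_eq] at ht
  rcases s with _ | s
  · refine le_dist_add_sum_tightGap hc hst ?_
    simp [starOrdering, SimpleGraph.dist_comm]
  obtain ⟨t, rfl⟩ : ∃ t', t = t' + 1 := ⟨t - 1, by omega⟩
  obtain ⟨i, p, rfl⟩ := exists_eq_mul_add (k := k) s
  obtain ⟨j, q, rfl⟩ := exists_eq_mul_add (k := k) t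
  by_cases hij : i = j
  · subst hij
    rw [starOrdering_succ, starOrdering_succ]
    have hpq : p < q := Nat.lt_of_mul_lt_mul_left (a := k) (by omega)
    have := hz p q hpq (Nat.lt_of_mul_lt_mul_left (a := k) (by omega))
    have := hg.sum_tightGap_starOrdering_ge (z := z) hT hT' hk hc
      (hg.diam_le_diam hT hT' (by omega)) i hpq
    rw [hg.dist_apply_apply hT hT']
    linarith
  · refine le_dist_add_sum_tightGap (x := starOrdering φ w z) hc hst ?_
    rw [starOrdering_succ, starOrdering_succ]
    exact hg.dist_apply_apply_of_ne hT hT' hij _ _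

lemma radioNumber_le_lowerBound (hg : IsStarGluing T w₀ T' φ w) (hT : T.Connected)
    (hT' : T'.Connected) (hk : 3 ≤ k) (hz : Set.BijOn z (Set.Iio (Fintype.card V)) Set.univ)
    (hzrad : IsRadioOrdering T w₀ z) (hzlast : z (Fintype.card V - 1) = w₀) :
    (radioNumber T' : ℤ) ≤ lowerBound T' w := by
  have hx := hg.bijOn_starOrdering hz
  have hupper := radioNumber_le_of_isRadioOrdering
    (hg.two_mul_dist_center_le_diam hT hT' (by omega)) hx
    (hg.isRadioOrdering_starOrdering hT hT' hk hzrad)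
  have hn : 0 < Fintype.card V := Fintype.card_pos_iff.mpr ⟨w₀⟩
  have hlast :
      Fintype.card V' - 1 = k * (Fintype.card V - 1) + (⟨k - 1, by omega⟩ : Fin k) + 1 := by
    rw [hg.card_eq, Nat.mul_sub_one]
    have := Nat.le_mul_of_pos_right k hn
    simp only
    omega
  rw [sum_tightGap_eq hx (by rw [hg.card_eq]; omega), hlast, starOrdering_succ, hzlast,
    hg.dist_apply_center hT hT'] at hupper
  simpa [starOrdering] using hupper

end Ordering

end IsStarGluing

end StarGluing

end RadioNr

/-- if `T` is a lower bound tree with unique weight center (so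
`rn(T) = (n₀-1)(d₀+1) - 2L(T) + 1`), then for `k ≥ 3` the glued tree `T_{S_k}` is
a lower bound tree (with unique weight center `w`, so `ε = 1`) and
`rn(T_{S_k}) = k(rn(T) + n₀(d - d₀ - 2) + d₀) + 1` where `d = diam(T_{S_k})`. -/
theorem glued_star_lower_bound_tree {V : Type*} [Fintype V] (T : SimpleGraph V)
    (hT : T.IsTree) (hd₀ : 2 ≤ T.diam) (w₀ : V)
    (hw₀ : IsWeightCenter T w₀) (hw₀uniq : ∀ v : V, IsWeightCenter T v → v = w₀)
    (hlb : (radioNumber T : ℤ) =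
      ((Fintype.card V : ℤ) - 1) * ((T.diam : ℤ) + 1) - 2 * (totalLevel T : ℤ) + 1)
    {k : ℕ} (hk : 3 ≤ k)
    {V' : Type*} [Fintype V'] (T' : SimpleGraph V') (hT' : T'.IsTree)
    (φ : Fin k → V → V') (w : V')
    (hinj : ∀ i, Function.Injective (φ i))
    (hdisj : ∀ i j, i ≠ j → ∀ (x y : V), φ i x ≠ φ j y)
    (hwni : ∀ i x, φ i x ≠ w)
    (hcover : ∀ v' : V', v' = w ∨ ∃ i x, φ i x = v')
    (hadj : ∀ i (x y : V), T'.Adj (φ i x) (φ i y) ↔ T.Adj x y)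
    (hadjw : ∀ i x, T'.Adj w (φ i x) ↔ x = w₀)
    (hcross : ∀ i j, i ≠ j → ∀ (x y : V), ¬ T'.Adj (φ i x) (φ j y)) :
    (radioNumber T' : ℤ) =
      ((Fintype.card V' : ℤ) - 1) * ((T'.diam : ℤ) + 1) - 2 * (totalLevel T' : ℤ) + 1 ∧
    (radioNumber T' : ℤ) =
      (k : ℤ) * ((radioNumber T : ℤ) +
        (Fintype.card V : ℤ) * ((T'.diam : ℤ) - (T.diam : ℤ) - 2) + (T.diam : ℤ)) + 1 := by
  have hTc := hT.connected
  have hT'c := hT'.connected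
  have hg : IsStarGluing T w₀ T' φ w := ⟨hinj, hdisj, hwni, hcover, hadj, hadjw, hcross⟩
  have : NeZero k := ⟨by omega⟩
  have hN : 2 ≤ Fintype.card V := by
    have : Nonempty V := ⟨w₀⟩
    obtain ⟨u, v, huv⟩ := T.exists_dist_eq_diam
    exact Fintype.one_lt_card_iff.mpr ⟨u, v, fun h => by simp [h] at huv; omega⟩
  have hL := totalLevel_eq_sum_dist hw₀ hw₀uniq
  have hL' := totalLevel_eq_sum_dist (hg.isWeightCenter_center hTc hT'c hw₀ (by omega))
    (hg.eq_center_of_isWeightCenter hTc hT'c hw₀ (by omega))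
  obtain ⟨z, hz, hzrad, hzlast⟩ := exists_isRadioOrdering_of_radioNumber_eq hTc hN (c := w₀)
    (by rw [hlb, hL, lowerBound]; push_cast; ring)
  have hrn : (radioNumber T' : ℤ) = lowerBound T' w :=
    le_antisymm (hg.radioNumber_le_lowerBound hTc hT'c hk hz hzrad hzlast)
      (lowerBound_le_radioNumber hT'c (by rw [hg.card_eq]; nlinarith) w)
  refine ⟨by rw [hrn, hL', lowerBound]; push_cast; ring, ?_⟩
  rw [hrn, hlb, hL, lowerBound, ← Nat.cast_sum, hg.card_eq, hg.sum_dist_center hTc hT'c]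
  push_cast
  ring
end
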